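/- arXiv:2111.04423 — 7 statements merged into one kernel-verified Lean document; each statement's English description precedes it below -/
import Mathlib

section
/- Let $n_i, k_i$ be positive integers for $i = 1, \dots, \ell$ with $n_i \geq (s+1)k_i$ for all $i$ (equivalently, with all ratios $n_i/k_i \geq s+1$). Then $\min_{x_1 + \dots + x_\ell = s,\ x_i \geq 0} \prod_{i=1}^\ell \binom{n_i - x_i}{k_i} = \min_{1 \leq i \leq \ell} \binom{n_i - s}{k_i} \prod_{j \neq i} \binom{n_j}{k_j}$. In other words, the minimum over all ways of distributing the total deficit $s$ among the coordinates is achieved by putting all of $s$ in a single coordinate. -/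
lemma lcA (a k : ℕ) : a.choose k * (a+2).choose k ≤ (a+1).choose k * (a+1).choose k := by
  rcases le_or_gt k (a+1) with hk | hk
  · have h1 : a.choose k * (a + 1) = (a+1).choose k * (a + 1 - k) := Nat.choose_mul_succ_eq a k
    have h2 : (a+1).choose k * (a + 2) = (a+2).choose k * (a + 2 - k) := Nat.choose_mul_succ_eq (a+1) k
    have key : (a.choose k * (a+2).choose k) * ((a+1) * (a+2-k))
        = ((a+1).choose k * (a+1).choose k) * ((a+1-k) * (a+2)) := by
      calc (a.choose k * (a+2).choose k) * ((a+1) * (a+2-k))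
          = (a.choose k * (a+1)) * ((a+2).choose k * (a+2-k)) := by ring
        _ = ((a+1).choose k * (a+1-k)) * ((a+1).choose k * (a+2)) := by rw [h1, ← h2]
        _ = ((a+1).choose k * (a+1).choose k) * ((a+1-k) * (a+2)) := by ring
    have hle : (a+1-k) * (a+2) ≤ (a+1) * (a+2-k) := by
      have e1 : (a+1-k) * (a+2) = (a+1)*(a+2) - k*(a+2) := by rw [Nat.sub_mul]
      have e2 : (a+1) * (a+2-k) = (a+1)*(a+2) - (a+1)*k := by rw [Nat.mul_sub]
      have e3 : k*(a+2) ≥ (a+1)*k := by nlinarith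
      have e4 : k*(a+2) ≤ (a+1)*(a+2) := Nat.mul_le_mul_right _ (by omega)
      omega
    have hpos : 0 < (a+1) * (a+2-k) := by
      have : 0 < a + 2 - k := by omega
      positivity
    have := key.trans_le (Nat.mul_le_mul_left _ hle)
    exact Nat.le_of_mul_le_mul_right this hpos
  · have : a.choose k = 0 := Nat.choose_eq_zero_of_lt (by omega)
    simp [this]

lemma minend (c : ℕ) (h : ℕ → ℕ) (hpos : ∀ t, t ≤ c → 0 < h t)
    (hlc : ∀ t, t + 2 ≤ c → h t * h (t+2) ≤ h (t+1) * h (t+1)) :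
    ∀ t, t ≤ c → min (h 0) (h c) ≤ h t := by
  have stays : ∀ u, u + 1 ≤ c → h (u+1) ≤ h u → ∀ d, u + 1 + d ≤ c → h (u+1+d) ≤ h (u+d) := by
    intro u hu hdec d
    induction d with
    | zero => intro _; simpa using hdec
    | succ m ih =>
      intro hm
      have ihm := ih (by omega)
      have hl := hlc (u + m) (by omega)
      have hp : 0 < h (u + m + 1) := hpos _ (by omega)
      have ihm2 : h (u+m+1) ≤ h (u+m) := by
        have e : u + 1 + m = u + m + 1 := by omega
        rwa [e] at ihm
      have step : h (u+m+1) * h (u+m+2) ≤ h (u+m+1) * h (u+m+1) :=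
        le_trans (Nat.mul_le_mul_right _ ihm2) hl
      have hfin : h (u+m+2) ≤ h (u+m+1) := Nat.le_of_mul_le_mul_left step hp
      have e1 : u + 1 + (m+1) = u + m + 2 := by omega
      have e2 : u + (m+1) = u + m + 1 := by omega
      rw [e1, e2]; exact hfin
  intro t ht
  by_cases hinc : ∀ u, u < t → h u < h (u+1)
  · have : ∀ r, r ≤ t → h 0 ≤ h r := by
      intro r
      induction r with
      | zero => intro _; exact le_refl _
      | succ m ih => intro hr; exact (ih (by omega)).trans (hinc m (by omega)).le
    exact le_trans (min_le_left _ _) (this t le_rfl)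
  · push_neg at hinc
    obtain ⟨u, hut, hdec⟩ := hinc
    have cons : ∀ v, u ≤ v → v + 1 ≤ c → h (v+1) ≤ h v := by
      intro v hv hvc
      have := stays u (by omega) hdec (v - u) (by omega)
      have e1 : u + 1 + (v - u) = v + 1 := by omega
      have e2 : u + (v - u) = v := by omega
      rwa [e1, e2] at this
    have anti : ∀ d v, u ≤ v → v + d ≤ c → h (v+d) ≤ h v := by
      intro d
      induction d with
      | zero => intro v _ _; exact le_refl _
      | succ m ih =>
        intro v hv hvc
        have : h (v + m + 1) ≤ h (v + m) := cons (v+m) (by omega) (by omega)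
        have e : v + (m+1) = v + m + 1 := by omega
        rw [e]
        exact this.trans (ih v hv (by omega))
    have : h c ≤ h t := by
      have := anti (c - t) t (by omega) (by omega)
      have e : t + (c - t) = c := by omega
      rwa [e] at this
    exact le_trans (min_le_right _ _) this

lemma twovar (c : ℕ) (f g : ℕ → ℕ)
    (hf : ∀ t, t ≤ c → 0 < f t) (hg : ∀ t, t ≤ c → 0 < g t)
    (hflc : ∀ t, t + 2 ≤ c → f t * f (t+2) ≤ f (t+1) * f (t+1))
    (hglc : ∀ t, t + 2 ≤ c → g t * g (t+2) ≤ g (t+1) * g (t+1))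
    (a b : ℕ) (hab : a + b = c) :
    min (f 0 * g c) (f c * g 0) ≤ f a * g b := by
  have := minend c (fun t => f t * g (c - t))
    (fun t ht => Nat.mul_pos (hf t ht) (hg (c - t) (by omega)))
    (fun t ht => by
      have hd : c - t = (c - (t+2)) + 2 := by omega
      have hd1 : c - (t+1) = (c - (t+2)) + 1 := by omega
      simp only [hd, hd1]
      set d := c - (t+2) with hdd
      have h1 := hflc t ht
      have h2 := hglc d (by omega)
      calc f t * g (d+2) * (f (t+2) * g d) = (f t * f (t+2)) * (g d * g (d+2)) := by ring
        _ ≤ (f (t+1) * f (t+1)) * (g (d+1) * g (d+1)) := Nat.mul_le_mul h1 h2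
        _ = f (t+1) * g (d+1) * (f (t+1) * g (d+1)) := by ring)
    a (by omega)
  simp only [Nat.sub_zero, Nat.sub_self] at this
  have hb : c - a = b := by omega
  rw [hb] at this
  exact this

open Finset in
lemma lowerbound (ℓ s : ℕ) (hs : 0 < s) (n k : Fin ℓ → ℕ)
    (hk : ∀ i, 0 < k i) (hn : ∀ i, (s + 1) * k i ≤ n i) (M : ℕ)
    (hM : ∀ i, M ≤ (n i - s).choose (k i) * ∏ j ∈ univ.erase i, (n j).choose (k j)) :
    ∀ m (x : Fin ℓ → ℕ), (univ.filter (fun i => x i ≠ 0)).card ≤ m → ∑ i, x i = s →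
      M ≤ ∏ i, (n i - x i).choose (k i) := by
  have hks : ∀ i, s + k i ≤ n i := by
    intro i
    have h1 : (s+1) * k i = s * k i + k i := by ring
    have h2 : s * 1 ≤ s * k i := Nat.mul_le_mul_left s (hk i)
    have := hn i
    omega
  have hFpos : ∀ (i : Fin ℓ) t, t ≤ s → 0 < (n i - t).choose (k i) := by
    intro i t ht
    exact Nat.choose_pos (by have := hks i; omega)
  have hFlc : ∀ (i : Fin ℓ) t, t + 2 ≤ s →
      (n i - t).choose (k i) * (n i - (t+2)).choose (k i)
        ≤ (n i - (t+1)).choose (k i) * (n i - (t+1)).choose (k i) := by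
    intro i t ht
    have hni := hks i
    have e0 : n i - t = (n i - (t+2)) + 2 := by omega
    have e1 : n i - (t+1) = (n i - (t+2)) + 1 := by omega
    rw [e0, e1]
    rw [Nat.mul_comm]
    exact lcA (n i - (t+2)) (k i)
  intro m
  induction m with
  | zero =>
    intro x hcard hsum
    have hemp : (univ.filter (fun i => x i ≠ 0)) = ∅ := Finset.card_eq_zero.mp (Nat.le_zero.mp hcard)
    have hx : ∀ i, x i = 0 := by
      intro i
      by_contra hxi
      have : i ∈ univ.filter (fun i => x i ≠ 0) := Finset.mem_filter.mpr ⟨mem_univ i, hxi⟩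
      simp [hemp] at this
    have : ∑ i, x i = 0 := Finset.sum_eq_zero (fun i _ => hx i)
    omega
  | succ m ih =>
    intro x hcard hsum
    rcases le_or_gt (univ.filter (fun i => x i ≠ 0)).card 1 with hle | hgt
    · -- at most one nonzero coordinate
      have hne : ∃ i, x i ≠ 0 := by
        by_contra hcon
        push_neg at hcon
        have : ∑ i, x i = 0 := Finset.sum_eq_zero (fun i _ => hcon i)
        omega
      obtain ⟨i, hi⟩ := hne
      have hxj : ∀ j, j ≠ i → x j = 0 := by
        intro j hj
        by_contra hxj
        have h2 : 1 < (univ.filter (fun i => x i ≠ 0)).card :=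
          Finset.one_lt_card.mpr ⟨j, Finset.mem_filter.mpr ⟨mem_univ _, hxj⟩,
            i, Finset.mem_filter.mpr ⟨mem_univ _, hi⟩, hj⟩
        omega
      have hxi : x i = s := by
        have := Finset.add_sum_erase univ x (mem_univ i)
        have hz : ∑ j ∈ univ.erase i, x j = 0 :=
          Finset.sum_eq_zero (fun j hj => hxj j (Finset.mem_erase.mp hj).1)
        omega
      have hprod : ∏ j, (n j - x j).choose (k j)
          = (n i - s).choose (k i) * ∏ j ∈ univ.erase i, (n j).choose (k j) := by
        rw [← Finset.mul_prod_erase univ _ (mem_univ i), hxi]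
        congr 1
        exact Finset.prod_congr rfl (fun j hj => by
          rw [hxj j (Finset.mem_erase.mp hj).1, Nat.sub_zero])
      rw [hprod]
      exact hM i
    · -- two nonzero coordinates i ≠ j
      obtain ⟨i, hi, j, hj, hij⟩ := Finset.one_lt_card.mp hgt
      have hxi : x i ≠ 0 := (Finset.mem_filter.mp hi).2
      have hxj : x j ≠ 0 := (Finset.mem_filter.mp hj).2
      set c := x i + x j with hc
      have hjei : j ∈ univ.erase i := Finset.mem_erase.mpr ⟨hij.symm, mem_univ _⟩
      -- decomposition of sums/products
      have hsumdec : ∑ p, x p = x i + (x j + ∑ p ∈ (univ.erase i).erase j, x p) := by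
        rw [← Finset.add_sum_erase univ x (mem_univ i), ← Finset.add_sum_erase _ x hjei]
      have hcs : c ≤ s := by omega
      -- the two extreme configurations
      set y : Fin ℓ → ℕ := Function.update (Function.update x i c) j 0 with hy
      set z : Fin ℓ → ℕ := Function.update (Function.update x i 0) j c with hz
      have hyi : y i = c := by rw [hy, Function.update_of_ne hij, Function.update_self]
      have hyj : y j = 0 := by rw [hy, Function.update_self]
      have hzi : z i = 0 := by rw [hz, Function.update_of_ne hij, Function.update_self]
      have hzj : z j = c := by rw [hz, Function.update_self]
      have hyp : ∀ p, p ≠ i → p ≠ j → y p = x p := by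
        intro p hpi hpj; rw [hy, Function.update_of_ne hpj, Function.update_of_ne hpi]
      have hzp : ∀ p, p ≠ i → p ≠ j → z p = x p := by
        intro p hpi hpj; rw [hz, Function.update_of_ne hpj, Function.update_of_ne hpi]
      have hrest : ∀ p, p ∈ (univ.erase i).erase j → p ≠ i ∧ p ≠ j := by
        intro p hp
        exact ⟨(Finset.mem_erase.mp (Finset.mem_erase.mp hp).2).1, (Finset.mem_erase.mp hp).1⟩
      have hysum : ∑ p, y p = s := by
        have hdec : ∑ p, y p = y i + (y j + ∑ p ∈ (univ.erase i).erase j, y p) := by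
          rw [← Finset.add_sum_erase univ y (mem_univ i), ← Finset.add_sum_erase _ y hjei]
        have hre : ∑ p ∈ (univ.erase i).erase j, y p = ∑ p ∈ (univ.erase i).erase j, x p :=
          Finset.sum_congr rfl (fun p hp => hyp p (hrest p hp).1 (hrest p hp).2)
        rw [hdec, hre, hyi, hyj]
        omega
      have hzsum : ∑ p, z p = s := by
        have hdec : ∑ p, z p = z i + (z j + ∑ p ∈ (univ.erase i).erase j, z p) := by
          rw [← Finset.add_sum_erase univ z (mem_univ i), ← Finset.add_sum_erase _ z hjei]
        have hre : ∑ p ∈ (univ.erase i).erase j, z p = ∑ p ∈ (univ.erase i).erase j, x p :=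
          Finset.sum_congr rfl (fun p hp => hzp p (hrest p hp).1 (hrest p hp).2)
        rw [hdec, hre, hzi, hzj]
        omega
      have hcpos : 0 < c := by omega
      have hycard : (univ.filter (fun p => y p ≠ 0)).card ≤ m := by
        have hsub : univ.filter (fun p => y p ≠ 0) ⊆ (univ.filter (fun p => x p ≠ 0)).erase j := by
          intro p hp
          have hyne : y p ≠ 0 := (Finset.mem_filter.mp hp).2
          have hpj : p ≠ j := by rintro rfl; exact hyne hyj
          refine Finset.mem_erase.mpr ⟨hpj, Finset.mem_filter.mpr ⟨mem_univ _, ?_⟩⟩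
          by_cases hpi : p = i
          · subst hpi; exact hxi
          · rw [← hyp p hpi hpj]; exact hyne
        have := Finset.card_le_card hsub
        rw [Finset.card_erase_of_mem hj] at this
        omega
      have hzcard : (univ.filter (fun p => z p ≠ 0)).card ≤ m := by
        have hsub : univ.filter (fun p => z p ≠ 0) ⊆ (univ.filter (fun p => x p ≠ 0)).erase i := by
          intro p hp
          have hzne : z p ≠ 0 := (Finset.mem_filter.mp hp).2
          have hpi : p ≠ i := by rintro rfl; exact hzne hzi
          refine Finset.mem_erase.mpr ⟨hpi, Finset.mem_filter.mpr ⟨mem_univ _, ?_⟩⟩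
          by_cases hpj : p = j
          · subst hpj; exact hxj
          · rw [← hzp p hpi hpj]; exact hzne
        have := Finset.card_le_card hsub
        rw [Finset.card_erase_of_mem hi] at this
        omega
      have hMy := ih y hycard hysum
      have hMz := ih z hzcard hzsum
      have hP : ∀ w : Fin ℓ → ℕ, ∏ p, (n p - w p).choose (k p)
          = (n i - w i).choose (k i) * ((n j - w j).choose (k j)
            * ∏ p ∈ (univ.erase i).erase j, (n p - w p).choose (k p)) := by
        intro w
        rw [← Finset.mul_prod_erase univ _ (mem_univ i), ← Finset.mul_prod_erase _ _ hjei]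
      set R := ∏ p ∈ (univ.erase i).erase j, (n p - x p).choose (k p) with hR
      have hRy : ∏ p ∈ (univ.erase i).erase j, (n p - y p).choose (k p) = R :=
        Finset.prod_congr rfl (fun p hp => by rw [hyp p (hrest p hp).1 (hrest p hp).2])
      have hRz : ∏ p ∈ (univ.erase i).erase j, (n p - z p).choose (k p) = R :=
        Finset.prod_congr rfl (fun p hp => by rw [hzp p (hrest p hp).1 (hrest p hp).2])
      have h2 := twovar c (fun t => (n i - t).choose (k i)) (fun t => (n j - t).choose (k j))
        (fun t ht => hFpos i t (le_trans ht hcs)) (fun t ht => hFpos j t (le_trans ht hcs))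
        (fun t ht => hFlc i t (by omega)) (fun t ht => hFlc j t (by omega))
        (x i) (x j) hc.symm
      rw [hP x]
      rcases le_total ((n i - 0).choose (k i) * (n j - c).choose (k j))
          ((n i - c).choose (k i) * (n j - 0).choose (k j)) with hAB | hAB
      · have h3 : (n i - 0).choose (k i) * (n j - c).choose (k j)
            ≤ (n i - x i).choose (k i) * (n j - x j).choose (k j) := by
          have := min_eq_left hAB ▸ h2
          exact this
        calc M ≤ ∏ p, (n p - z p).choose (k p) := hMz
          _ = (n i - 0).choose (k i) * ((n j - c).choose (k j) * R) := by
              rw [hP z, hzi, hzj, hRz]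
          _ = ((n i - 0).choose (k i) * (n j - c).choose (k j)) * R := by ring
          _ ≤ ((n i - x i).choose (k i) * (n j - x j).choose (k j)) * R :=
              Nat.mul_le_mul_right R h3
          _ = (n i - x i).choose (k i) * ((n j - x j).choose (k j) * R) := by ring
      · have h3 : (n i - c).choose (k i) * (n j - 0).choose (k j)
            ≤ (n i - x i).choose (k i) * (n j - x j).choose (k j) := by
          have := min_eq_right hAB ▸ h2
          exact this
        calc M ≤ ∏ p, (n p - y p).choose (k p) := hMy
          _ = (n i - c).choose (k i) * ((n j - 0).choose (k j) * R) := by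
              rw [hP y, hyi, hyj, hRy]
          _ = ((n i - c).choose (k i) * (n j - 0).choose (k j)) * R := by ring
          _ ≤ ((n i - x i).choose (k i) * (n j - x j).choose (k j)) * R :=
              Nat.mul_le_mul_right R h3
          _ = (n i - x i).choose (k i) * ((n j - x j).choose (k j) * R) := by ring

theorem stmt1 (ℓ s : ℕ) (hl : 0 < ℓ) (hs : 0 < s) (n k : Fin ℓ → ℕ)
    (hk : ∀ i, 0 < k i) (hn : ∀ i, (s + 1) * k i ≤ n i) :
    IsLeast {v : ℕ | ∃ x : Fin ℓ → ℕ, (∑ i, x i = s) ∧ v = ∏ i, (n i - x i).choose (k i)}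
      (Finset.univ.inf' ⟨⟨0, hl⟩, Finset.mem_univ _⟩
        (fun i => (n i - s).choose (k i) *
          ∏ j ∈ Finset.univ.erase i, (n j).choose (k j))) := by
  constructor
  · -- membership
    obtain ⟨i0, _, hi0⟩ := Finset.exists_mem_eq_inf' (⟨⟨0, hl⟩, Finset.mem_univ _⟩ :
        (Finset.univ : Finset (Fin ℓ)).Nonempty)
        (fun i => (n i - s).choose (k i) * ∏ j ∈ Finset.univ.erase i, (n j).choose (k j))
    refine ⟨fun j => if j = i0 then s else 0, ?_, ?_⟩
    · simp [Finset.sum_ite_eq']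
    · rw [hi0, ← Finset.mul_prod_erase Finset.univ _ (Finset.mem_univ i0)]
      simp only [if_pos rfl]
      congr 1
      refine Finset.prod_congr rfl (fun j hj => ?_)
      rw [if_neg (Finset.mem_erase.mp hj).1, Nat.sub_zero]
  · rintro v ⟨x, hsum, rfl⟩
    exact lowerbound ℓ s hs n k hk hn _
      (fun i => Finset.inf'_le _ (Finset.mem_univ i))
      (Finset.univ.filter (fun i => x i ≠ 0)).card x le_rfl hsum
end

section
/- Let $V_1, \dots, V_\ell$ be pairwise disjoint finite sets with $|V_i| = n_i$, and let $\mathcal{F} \subseteq \sqcup_{i=1}^\ell \binom{V_i}{k_i}$ satisfy $\nu(\mathcal{F}) \leq s$, where $s + 1 \leq n_1/k_1 \leq n_2/k_2 \leq \dots \leq n_\ell/k_\ell$ and $\ell \geq 2$. Then $|\mathcal{F}| \leq \frac{(s+1)k_1}{n_1} \prod_{i=1}^\ell \binom{n_i}{k_i}$. -/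
open Finset
set_option linter.unusedSectionVars false
section
variable {α : Type*} [DecidableEq α] {ι : Type*} [Fintype ι] [DecidableEq ι] (k : ι → ℕ)

def PF (W : ι → Finset α) : Finset (Finset α) :=
  ((Finset.univ.biUnion W).powerset).filter (fun G => ∀ i, (G ∩ W i).card = k i)

lemma mem_PF {W : ι → Finset α} {A : Finset α} :
    A ∈ PF k W ↔ A ⊆ Finset.univ.biUnion W ∧ ∀ i, (A ∩ W i).card = k i := by
  simp [PF]

lemma biUnion_inter_eq {W g : ι → Finset α} (hW : ∀ i j, i ≠ j → Disjoint (W i) (W j))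
    (hsub : ∀ i, g i ⊆ W i) (i : ι) : (Finset.univ.biUnion g) ∩ W i = g i := by
  ext x
  simp only [Finset.mem_inter, Finset.mem_biUnion, Finset.mem_univ, true_and]
  constructor
  · rintro ⟨⟨j, hj⟩, hx⟩
    rcases eq_or_ne j i with rfl | hne
    · exact hj
    · exact absurd hx (Finset.disjoint_left.1 (hW j i hne) (hsub j hj))
  · intro hx
    exact ⟨⟨i, hx⟩, hsub i hx⟩

lemma card_PF {W : ι → Finset α} (hW : ∀ i j, i ≠ j → Disjoint (W i) (W j)) :
    (PF k W).card = ∏ i, (W i).card.choose (k i) := by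
  classical
  rw [show ∏ i, (W i).card.choose (k i) = ∏ i, ((W i).powersetCard (k i)).card from by
    simp [Finset.card_powersetCard], ← Fintype.card_piFinset]
  symm
  apply Finset.card_bij (fun g _ => Finset.univ.biUnion g)
  · intro g hg
    rw [Fintype.mem_piFinset] at hg
    have hsub : ∀ i, g i ⊆ W i := fun i => (Finset.mem_powersetCard.1 (hg i)).1
    have hcard : ∀ i, (g i).card = k i := fun i => (Finset.mem_powersetCard.1 (hg i)).2
    rw [mem_PF]
    refine ⟨Finset.biUnion_subset.2 fun i _ =>
      (hsub i).trans (Finset.subset_biUnion_of_mem W (Finset.mem_univ i)), ?_⟩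
    intro i; rw [biUnion_inter_eq hW hsub i, hcard i]
  · intro g hg g' hg' heq
    rw [Fintype.mem_piFinset] at hg hg'
    funext i
    rw [← biUnion_inter_eq hW (fun i => (Finset.mem_powersetCard.1 (hg i)).1) i,
      ← biUnion_inter_eq hW (fun i => (Finset.mem_powersetCard.1 (hg' i)).1) i, heq]
  · intro A hA
    rw [mem_PF] at hA
    refine ⟨fun i => A ∩ W i, ?_, ?_⟩
    · rw [Fintype.mem_piFinset]
      intro i
      exact Finset.mem_powersetCard.2 ⟨Finset.inter_subset_right, hA.2 i⟩
    · ext x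
      simp only [Finset.mem_biUnion, Finset.mem_univ, true_and, Finset.mem_inter]
      constructor
      · rintro ⟨i, hx, _⟩; exact hx
      · intro hx
        obtain ⟨i, _, hxi⟩ := Finset.mem_biUnion.1 (hA.1 hx)
        exact ⟨i, hx, hxi⟩

def TF (W : ι → Finset α) (r : ℕ) : Finset (Fin r → Finset α) :=
  (Fintype.piFinset fun _ => PF k W).filter
    (fun t => ∀ j j' : Fin r, j ≠ j' → Disjoint (t j) (t j'))

lemma mem_TF {W : ι → Finset α} {r : ℕ} {t : Fin r → Finset α} :
    t ∈ TF k W r ↔ (∀ j, t j ∈ PF k W) ∧ ∀ j j' : Fin r, j ≠ j' → Disjoint (t j) (t j') := by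
  simp [TF, Fintype.mem_piFinset]

lemma PF_sdiff_of_disjoint {W : ι → Finset α} {A G : Finset α}
    (hG : G ∈ PF k W) (hd : Disjoint G A) : G ∈ PF k (fun i => W i \ A) := by
  rw [mem_PF] at hG ⊢
  have hGA : ∀ x ∈ G, x ∉ A := fun x hx => Finset.disjoint_left.1 hd hx
  constructor
  · intro x hx
    obtain ⟨i, _, hxi⟩ := Finset.mem_biUnion.1 (hG.1 hx)
    exact Finset.mem_biUnion.2 ⟨i, Finset.mem_univ i, Finset.mem_sdiff.2 ⟨hxi, hGA x hx⟩⟩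
  · intro i
    rw [← hG.2 i]
    congr 1
    ext x
    simp only [Finset.mem_inter, Finset.mem_sdiff]
    exact ⟨fun ⟨h1, h2, _⟩ => ⟨h1, h2⟩, fun ⟨h1, h2⟩ => ⟨h1, h2, hGA x h1⟩⟩

lemma PF_of_sdiff {W : ι → Finset α} {A G : Finset α}
    (hG : G ∈ PF k (fun i => W i \ A)) : G ∈ PF k W ∧ Disjoint G A := by
  rw [mem_PF] at hG
  have hd : Disjoint G A := by
    rw [Finset.disjoint_left]
    intro x hx hxA
    obtain ⟨i, _, hxi⟩ := Finset.mem_biUnion.1 (hG.1 hx)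
    exact (Finset.mem_sdiff.1 hxi).2 hxA
  have hGA : ∀ x ∈ G, x ∉ A := fun x hx => Finset.disjoint_left.1 hd hx
  refine ⟨mem_PF k |>.2 ⟨?_, ?_⟩, hd⟩
  · intro x hx
    obtain ⟨i, _, hxi⟩ := Finset.mem_biUnion.1 (hG.1 hx)
    exact Finset.mem_biUnion.2 ⟨i, Finset.mem_univ i, (Finset.mem_sdiff.1 hxi).1⟩
  · intro i
    rw [← hG.2 i]
    congr 1
    ext x
    simp only [Finset.mem_inter, Finset.mem_sdiff]
    exact ⟨fun ⟨h1, h2⟩ => ⟨h1, h2, hGA x h1⟩, fun ⟨h1, h2, _⟩ => ⟨h1, h2⟩⟩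

lemma card_fiber {W : ι → Finset α} {A : Finset α} (hA : A ∈ PF k W) {r : ℕ} (j : Fin (r + 1)) :
    ((TF k W (r + 1)).filter (fun t => t j = A)).card = (TF k (fun i => W i \ A) r).card := by
  apply Finset.card_bij (fun t _ => fun j' => t (j.succAbove j'))
  · intro t ht
    rw [Finset.mem_filter] at ht
    obtain ⟨ht, htj⟩ := ht
    rw [mem_TF] at ht
    rw [mem_TF]
    constructor
    · intro j'
      exact PF_sdiff_of_disjoint k (ht.1 _)
        (htj ▸ ht.2 _ j (Fin.succAbove_ne j j'))
    · intro j1 j2 hne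
      exact ht.2 _ _ (fun h => hne (Fin.succAbove_right_injective h))
  · intro t ht t' ht' heq
    rw [Finset.mem_filter] at ht ht'
    funext j'
    rcases eq_or_ne j' j with rfl | hne
    · rw [ht.2, ht'.2]
    · obtain ⟨j'', rfl⟩ := Fin.exists_succAbove_eq hne
      exact congrFun heq j''
  · intro t' ht'
    rw [mem_TF] at ht'
    refine ⟨j.insertNth A t', ?_, ?_⟩
    · rw [Finset.mem_filter, mem_TF]
      refine ⟨⟨?_, ?_⟩, by simp⟩
      · intro j'
        rcases eq_or_ne j' j with rfl | hne
        · rw [Fin.insertNth_apply_same]; exact hA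
        · obtain ⟨j'', rfl⟩ := Fin.exists_succAbove_eq hne
          rw [Fin.insertNth_apply_succAbove]
          exact (PF_of_sdiff k (ht'.1 j'')).1
      · intro j1 j2 hne
        rcases eq_or_ne j1 j with rfl | hne1
        · obtain ⟨j2', rfl⟩ := Fin.exists_succAbove_eq hne.symm
          rw [Fin.insertNth_apply_same, Fin.insertNth_apply_succAbove]
          exact ((PF_of_sdiff k (ht'.1 j2')).2).symm
        · obtain ⟨j1', rfl⟩ := Fin.exists_succAbove_eq hne1
          rcases eq_or_ne j2 j with rfl | hne2
          · rw [Fin.insertNth_apply_same, Fin.insertNth_apply_succAbove]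
            exact (PF_of_sdiff k (ht'.1 j1')).2
          · obtain ⟨j2', rfl⟩ := Fin.exists_succAbove_eq hne2
            rw [Fin.insertNth_apply_succAbove, Fin.insertNth_apply_succAbove]
            exact ht'.2 _ _ (fun h => hne (by rw [h]))
    · funext j'
      simp [Fin.insertNth_apply_succAbove]

lemma card_sdiff_PF {W : ι → Finset α} {A : Finset α} (hA : A ∈ PF k W) (i : ι) :
    (W i \ A).card = (W i).card - k i := by
  have : W i \ A = W i \ (A ∩ W i) := by
    ext x; simp only [Finset.mem_sdiff, Finset.mem_inter]; tauto
  rw [this, Finset.card_sdiff_of_subset Finset.inter_subset_right, (mem_PF k).1 hA |>.2 i]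

lemma card_TF {W : ι → Finset α} (hW : ∀ i j, i ≠ j → Disjoint (W i) (W j)) (r : ℕ) :
    (TF k W r).card = ∏ j ∈ Finset.range r, ∏ i, ((W i).card - j * k i).choose (k i) := by
  induction r generalizing W with
  | zero =>
    rw [Finset.range_zero, Finset.prod_empty, TF, Finset.filter_true_of_mem
      (fun t _ => fun j => j.elim0), Fintype.card_piFinset]
    simp
  | succ r ih =>
    have h1 : (TF k W (r + 1)).card =
        ∑ A ∈ PF k W, ((TF k W (r + 1)).filter (fun t => t 0 = A)).card :=
      Finset.card_eq_sum_card_fiberwise (fun t ht => ((mem_TF k).1 ht).1 0)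
    have h2 : ∀ A ∈ PF k W, ((TF k W (r + 1)).filter (fun t => t 0 = A)).card =
        ∏ j ∈ Finset.range r, ∏ i, ((W i).card - (j + 1) * k i).choose (k i) := by
      intro A hA
      rw [card_fiber k hA 0, ih (fun i j hij => Finset.disjoint_of_subset_left
        Finset.sdiff_subset (Finset.disjoint_of_subset_right Finset.sdiff_subset (hW i j hij)))]
      apply Finset.prod_congr rfl
      intro j _
      apply Finset.prod_congr rfl
      intro i _
      rw [card_sdiff_PF k hA i]
      have h3 : (W i).card - k i - j * k i = (W i).card - (j + 1) * k i := by rw [Nat.sub_sub, add_one_mul, add_comm]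
      rw [h3]
    rw [h1, Finset.sum_congr rfl h2, Finset.sum_const, card_PF k hW, smul_eq_mul,
      Finset.prod_range_succ']
    rw [mul_comm]
    congr 1
    apply Finset.prod_congr rfl
    intro i _
    have h3 : (W i).card - 0 * k i = (W i).card := by rw [zero_mul, Nat.sub_zero]
    rw [h3]
end

theorem stmt2 {α : Type*} [DecidableEq α] (ℓ s : ℕ) (hl : 2 ≤ ℓ) (hs : 0 < s)
    (n k : Fin ℓ → ℕ) (hk : ∀ i, 0 < k i)
    (V : Fin ℓ → Finset α)
    (hV : ∀ i j, i ≠ j → Disjoint (V i) (V j))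
    (hVcard : ∀ i, (V i).card = n i)
    (hratio0 : (s + 1) * k ⟨0, by omega⟩ ≤ n ⟨0, by omega⟩)
    (hsorted : ∀ i j : Fin ℓ, i ≤ j → n i * k j ≤ n j * k i)
    (F : Finset (Finset α))
    (hF : ∀ A ∈ F, A ⊆ Finset.univ.biUnion V ∧ ∀ i, (A ∩ V i).card = k i)
    (hmatch : ∀ M : Finset (Finset α), M ⊆ F →
      (↑M : Set (Finset α)).Pairwise Disjoint → M.card ≤ s) :
    (F.card : ℝ) ≤ ((s + 1 : ℝ) * (k ⟨0, by omega⟩ : ℝ)) / (n ⟨0, by omega⟩ : ℝ) *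
      ∏ i, ((n i).choose (k i) : ℝ) := by
  classical
  set i0 : Fin ℓ := ⟨0, by omega⟩ with hi0
  clear_value i0
  have hk0 : 0 < k i0 := hk i0
  have hn0 : 0 < n i0 := lt_of_lt_of_le (by positivity) hratio0
  have hm1 : s + 1 ≤ n i0 / k i0 := (Nat.le_div_iff_mul_le hk0).2 hratio0
  obtain ⟨r, hr⟩ : ∃ r, n i0 / k i0 = r + 1 := ⟨n i0 / k i0 - 1, by omega⟩
  have hsm : s + 1 ≤ r + 1 := hr ▸ hm1
  have hmk : ∀ i, (r + 1) * k i ≤ n i := by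
    intro i
    have h1 : (r + 1) * k i0 ≤ n i0 := hr ▸ Nat.div_mul_le_self (n i0) (k i0)
    have h2 : n i0 * k i ≤ n i * k i0 := hsorted i0 i (by simp [hi0, Fin.le_def])
    have h3 : (r + 1) * k i * k i0 ≤ n i * k i0 := by
      calc (r + 1) * k i * k i0 = (r + 1) * k i0 * k i := by ring
        _ ≤ n i0 * k i := Nat.mul_le_mul_right _ h1
        _ ≤ n i * k i0 := h2
    exact Nat.le_of_mul_le_mul_right h3 hk0
  have hFP : ∀ A ∈ F, A ∈ PF k V := fun A hA => (mem_PF k).2 (hF A hA)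
  obtain ⟨C0, hC0⟩ : ∃ c, (∏ j ∈ Finset.range r, ∏ i, ((n i - k i) - j * k i).choose (k i)) = c :=
    ⟨_, rfl⟩
  -- fibers are constant
  have hfiber : ∀ (j : Fin (r + 1)), ∀ A ∈ F,
      ((TF k V (r + 1)).filter (fun t => t j = A)).card = C0 := by
    intro j A hA
    rw [card_fiber k (hFP A hA) j]
    rw [card_TF k (fun i j hij => Finset.disjoint_of_subset_left Finset.sdiff_subset
      (Finset.disjoint_of_subset_right Finset.sdiff_subset (hV i j hij)))]
    rw [← hC0]
    apply Finset.prod_congr rfl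
    intro j' _
    apply Finset.prod_congr rfl
    intro i _
    rw [card_sdiff_PF k (hFP A hA) i, hVcard i]
  -- the total count of tuples
  have htotal : (TF k V (r + 1)).card = (∏ i, (n i).choose (k i)) * C0 := by
    rw [card_TF k hV, Finset.prod_range_succ', mul_comm, ← hC0]
    congr 1
    · apply Finset.prod_congr rfl
      intro i _
      rw [hVcard i, zero_mul, Nat.sub_zero]
    · apply Finset.prod_congr rfl
      intro j _
      apply Finset.prod_congr rfl
      intro i _
      rw [hVcard i]
      congr 1
      rw [Nat.sub_sub, add_one_mul, add_comm]
  -- each tuple contains at most s members of F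
  have hupper : ∀ t ∈ TF k V (r + 1), (Finset.univ.filter (fun j => t j ∈ F)).card ≤ s := by
    intro t ht
    rw [mem_TF] at ht
    have hne : ∀ j, (t j).Nonempty := by
      intro j
      have h0 := ((mem_PF k).1 (ht.1 j)).2 i0
      have h2 : (t j ∩ V i0).Nonempty := Finset.card_pos.1 (by rw [h0]; exact hk0)
      exact h2.mono Finset.inter_subset_left
    have hinj : Set.InjOn t ↑(Finset.univ.filter (fun j => t j ∈ F)) := by
      intro j1 _ j2 _ heq
      by_contra hne'
      have hd := ht.2 j1 j2 hne'
      rw [heq] at hd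
      exact (hne j2).ne_empty (Finset.bot_eq_empty ▸ disjoint_self.1 hd)
    rw [← Finset.card_image_of_injOn hinj]
    apply hmatch
    · intro A hA
      obtain ⟨j, hj, rfl⟩ := Finset.mem_image.1 hA
      exact (Finset.mem_filter.1 hj).2
    · intro x hx y hy hxy
      obtain ⟨j1, _, rfl⟩ := Finset.mem_image.1 hx
      obtain ⟨j2, _, rfl⟩ := Finset.mem_image.1 hy
      exact ht.2 j1 j2 (fun h => hxy (by rw [h]))
  -- double counting
  have hS : ∑ t ∈ TF k V (r + 1), (Finset.univ.filter (fun j => t j ∈ F)).card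
      = (r + 1) * (F.card * C0) := by
    calc ∑ t ∈ TF k V (r + 1), (Finset.univ.filter (fun j => t j ∈ F)).card
        = ∑ t ∈ TF k V (r + 1), ∑ j : Fin (r + 1), if t j ∈ F then 1 else 0 := by
          exact Finset.sum_congr rfl (fun t _ => Finset.card_filter _ _)
      _ = ∑ j : Fin (r + 1), ∑ t ∈ TF k V (r + 1), if t j ∈ F then 1 else 0 :=
          Finset.sum_comm
      _ = ∑ j : Fin (r + 1), ((TF k V (r + 1)).filter (fun t => t j ∈ F)).card := by
          exact Finset.sum_congr rfl (fun j _ => (Finset.card_filter _ _).symm)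
      _ = ∑ j : Fin (r + 1), ∑ A ∈ F, ((TF k V (r + 1)).filter (fun t => t j = A)).card := by
          apply Finset.sum_congr rfl
          intro j _
          have hfib := Finset.card_eq_sum_card_fiberwise
            (s := (TF k V (r + 1)).filter (fun t => t j ∈ F)) (t := F) (f := fun t => t j)
            (fun t ht => (Finset.mem_filter.1 ht).2)
          rw [hfib]
          apply Finset.sum_congr rfl
          intro A hA
          rw [Finset.filter_filter]
          congr 1
          apply Finset.filter_congr
          intro t _
          constructor
          · exact fun h => h.2
          · exact fun h => ⟨h ▸ hA, h⟩
      _ = ∑ j : Fin (r + 1), ∑ A ∈ F, C0 := by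
          exact Finset.sum_congr rfl (fun j _ => Finset.sum_congr rfl (hfiber j))
      _ = (r + 1) * (F.card * C0) := by
          simp [Finset.sum_const, Finset.card_univ, mul_assoc]
  -- positivity of C0
  have hC0pos : 0 < C0 := by
    rw [← hC0]
    apply Finset.prod_pos
    intro j hj
    apply Finset.prod_pos
    intro i _
    apply Nat.choose_pos
    have hj' : j + 2 ≤ r + 1 := Nat.succ_le_succ (Finset.mem_range.1 hj)
    have h2 : k i + j * k i + k i ≤ n i := by
      calc k i + j * k i + k i = (j + 2) * k i := by ring
        _ ≤ (r + 1) * k i := Nat.mul_le_mul_right _ hj'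
        _ ≤ n i := hmk i
    exact Nat.le_sub_of_add_le (Nat.le_sub_of_add_le h2)
  -- the key nat inequality
  have hkey : (r + 1) * F.card ≤ s * ∏ i, (n i).choose (k i) := by
    have h1 : (r + 1) * (F.card * C0) ≤ s * ((∏ i, (n i).choose (k i)) * C0) := by
      rw [← hS, ← htotal]
      calc ∑ t ∈ TF k V (r + 1), (Finset.univ.filter (fun j => t j ∈ F)).card
          ≤ ∑ _t ∈ TF k V (r + 1), s := Finset.sum_le_sum hupper
        _ = (TF k V (r + 1)).card * s := by rw [Finset.sum_const, smul_eq_mul]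
        _ = s * (TF k V (r + 1)).card := mul_comm _ _
    have h2 : (r + 1) * F.card * C0 ≤ s * (∏ i, (n i).choose (k i)) * C0 := by
      calc (r + 1) * F.card * C0 = (r + 1) * (F.card * C0) := by ring
        _ ≤ s * ((∏ i, (n i).choose (k i)) * C0) := h1
        _ = s * (∏ i, (n i).choose (k i)) * C0 := by ring
    exact Nat.le_of_mul_le_mul_right h2 hC0pos
  -- the mod inequality
  have hmod : s * n i0 ≤ (s + 1) * k i0 * (r + 1) := by
    obtain ⟨a, ha⟩ : ∃ a, n i0 % k i0 = a := ⟨_, rfl⟩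
    have h1 : k i0 * (r + 1) + a = n i0 := by
      rw [← ha, ← hr]; exact Nat.div_add_mod (n i0) (k i0)
    have h2 : a ≤ k i0 := ha ▸ le_of_lt (Nat.mod_lt _ hk0)
    have h3 : s ≤ r + 1 := le_trans (Nat.le_succ s) hsm
    calc s * n i0 = s * (k i0 * (r + 1)) + s * a := by rw [← h1]; ring
      _ ≤ s * (k i0 * (r + 1)) + s * k i0 := Nat.add_le_add_left (Nat.mul_le_mul_left _ h2) _
      _ ≤ s * (k i0 * (r + 1)) + (r + 1) * k i0 :=
          Nat.add_le_add_left (Nat.mul_le_mul_right _ h3) _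
      _ = (s + 1) * k i0 * (r + 1) := by ring
  -- pass to the reals
  show (F.card : ℝ) ≤ ((s + 1 : ℝ) * (k i0 : ℝ)) / (n i0 : ℝ) * ∏ i, ((n i).choose (k i) : ℝ)
  have hn0R : (0 : ℝ) < (n i0 : ℝ) := by exact_mod_cast hn0
  have hmR : (0 : ℝ) < ((r : ℝ) + 1) := by positivity
  have hPR : (0 : ℝ) ≤ ∏ i, ((n i).choose (k i) : ℝ) := by positivity
  have h1R : ((r : ℝ) + 1) * F.card ≤ s * ∏ i, ((n i).choose (k i) : ℝ) := by
    exact_mod_cast hkey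
  have h2R : (s : ℝ) * n i0 ≤ ((s : ℝ) + 1) * k i0 * ((r : ℝ) + 1) := by exact_mod_cast hmod
  rw [div_mul_eq_mul_div, le_div_iff₀ hn0R]
  have h3 : (F.card : ℝ) * n i0 * ((r : ℝ) + 1) ≤
      ((s : ℝ) + 1) * k i0 * (∏ i, ((n i).choose (k i) : ℝ)) * ((r : ℝ) + 1) := by
    calc (F.card : ℝ) * n i0 * ((r : ℝ) + 1) = (((r : ℝ) + 1) * F.card) * n i0 := by ring
      _ ≤ (s * ∏ i, ((n i).choose (k i) : ℝ)) * n i0 :=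
          mul_le_mul_of_nonneg_right h1R (le_of_lt hn0R)
      _ = ((s : ℝ) * n i0) * ∏ i, ((n i).choose (k i) : ℝ) := by ring
      _ ≤ (((s : ℝ) + 1) * k i0 * ((r : ℝ) + 1)) * ∏ i, ((n i).choose (k i) : ℝ) :=
          mul_le_mul_of_nonneg_right h2R hPR
      _ = ((s : ℝ) + 1) * k i0 * (∏ i, ((n i).choose (k i) : ℝ)) * ((r : ℝ) + 1) := by ring
  exact le_of_mul_le_mul_right h3 hmR
end

section
/- Let $G_1, G_2, \dots, G_s$ be bipartite graphs with the same partite sets $L$ and $R$, where $|L| = |R| = m \geq s$. If $e(G_i) > (s-1)m$ for every $i \in [s]$, then $G_1, \dots, G_s$ contain a rainbow matching, i.e., there exist pairwise disjoint edges $e_1 \in G_1, \dots, e_s \in G_s$. -/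
open Finset

/-- Greedy selection: if `(A i).card > i` for each `i : Fin n`, we can pick
distinct representatives. -/
lemma aux_choose {α : Type*} [DecidableEq α] :
    ∀ (n : ℕ) (A : Fin n → Finset α), (∀ i : Fin n, (i : ℕ) < (A i).card) →
    ∃ f : Fin n → α, (∀ i, f i ∈ A i) ∧ Function.Injective f := by
  intro n
  induction n with
  | zero =>
    intro A _
    exact ⟨Fin.elim0, fun i => i.elim0, fun i => i.elim0⟩
  | succ n ih =>
    intro A hA
    obtain ⟨a, ha⟩ := Finset.card_pos.mp (by simpa using hA 0)
    have hA' : ∀ i : Fin n, (i : ℕ) < ((A i.succ).erase a).card := by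
      intro i
      have h1 := hA i.succ
      have h2 : (A i.succ).card - 1 ≤ ((A i.succ).erase a).card :=
        Finset.pred_card_le_card_erase
      have : (i.succ : ℕ) = (i : ℕ) + 1 := rfl
      omega
    obtain ⟨g, hg, hginj⟩ := ih (fun i => (A i.succ).erase a) hA'
    refine ⟨Fin.cases a g, ?_, ?_⟩
    · intro i
      refine Fin.cases ?_ ?_ i
      · exact ha
      · intro j
        exact Finset.mem_of_mem_erase (hg j)
    · intro i j hij
      rcases Fin.eq_zero_or_eq_succ i with rfl | ⟨i', rfl⟩ <;>
        rcases Fin.eq_zero_or_eq_succ j with rfl | ⟨j', rfl⟩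
      · rfl
      · simp only [Fin.cases_zero, Fin.cases_succ] at hij
        exact absurd hij.symm (Finset.mem_erase.mp (hg j')).1
      · simp only [Fin.cases_succ, Fin.cases_zero] at hij
        exact absurd hij (Finset.mem_erase.mp (hg i')).1
      · simp only [Fin.cases_succ] at hij
        rw [hginj hij]

theorem stmt6 {α : Type*} [DecidableEq α] (s m : ℕ) (hs : 0 < s) (hm : s ≤ m)
    (L R : Finset α) (hLR : Disjoint L R) (hL : L.card = m) (hR : R.card = m)
    (G : Fin s → Finset (α × α)) (hG : ∀ i, G i ⊆ L ×ˢ R)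
    (he : ∀ i, (s - 1) * m < (G i).card) :
    ∃ e : Fin s → α × α, (∀ i, e i ∈ G i) ∧
      ∀ i j, i ≠ j → (e i).1 ≠ (e j).1 ∧ (e i).2 ≠ (e j).2 := by
  classical
  -- degree of a left vertex in graph i
  set d : Fin s → α → ℕ := fun i x => ((G i).filter (fun e => e.1 = x)).card with hd
  -- degrees are at most m
  have hdle : ∀ i x, d i x ≤ m := by
    intro i x
    rw [← hR]
    apply Finset.card_le_card_of_injOn Prod.snd
    · intro e he'
      have := Finset.mem_product.mp (hG i (Finset.mem_filter.mp he').1)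
      exact this.2
    · intro e he' e' he'' hsnd
      have h1 := (Finset.mem_filter.mp he').2
      have h2 := (Finset.mem_filter.mp he'').2
      exact Prod.ext (h1.trans h2.symm) hsnd
  -- sum of degrees is the number of edges
  have hsum : ∀ i, (G i).card = ∑ x ∈ L, d i x := by
    intro i
    exact Finset.card_eq_sum_card_fiberwise
      (fun e he' => (Finset.mem_product.mp (hG i he')).1)
  -- key counting: at least s - t + 1 left vertices of degree ≥ t
  have key : ∀ (i : Fin s) (t : ℕ), 1 ≤ t → t ≤ s →
      s < (L.filter fun x => t ≤ d i x).card + t := by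
    intro i t ht1 hts
    by_contra h
    push_neg at h
    set B := L.filter fun x => t ≤ d i x with hB
    have hBL : B ⊆ L := Finset.filter_subset _ _
    have hbm : B.card ≤ m := hL ▸ Finset.card_le_card hBL
    have hum : (L \ B).card ≤ m := hL ▸ Finset.card_le_card (Finset.sdiff_subset)
    have hsplit : (G i).card = ∑ x ∈ B, d i x + ∑ x ∈ L \ B, d i x := by
      rw [hsum i, ← Finset.sum_union (Finset.disjoint_sdiff),
        Finset.union_sdiff_of_subset hBL]
    have h1 : ∑ x ∈ B, d i x ≤ B.card * m :=
      Finset.sum_le_card_nsmul _ _ _ (fun x _ => hdle i x)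
    have h2 : ∑ x ∈ L \ B, d i x ≤ (L \ B).card * (t - 1) := by
      apply Finset.sum_le_card_nsmul
      intro x hx
      have hx' := Finset.mem_sdiff.mp hx
      have : ¬ (t ≤ d i x) := by
        intro hcon
        exact hx'.2 (Finset.mem_filter.mpr ⟨hx'.1, hcon⟩)
      omega
    have h3 : (L \ B).card * (t - 1) ≤ m * (t - 1) :=
      Nat.mul_le_mul_right _ hum
    have h4 : B.card * m + m * (t - 1) = m * (B.card + (t - 1)) := by ring
    have h5 : B.card + (t - 1) ≤ s - 1 := by omega
    have h6 : m * (B.card + (t - 1)) ≤ m * (s - 1) := Nat.mul_le_mul_left _ h5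
    have h7 := he i
    have : (G i).card ≤ (s - 1) * m := by
      calc (G i).card = ∑ x ∈ B, d i x + ∑ x ∈ L \ B, d i x := hsplit
        _ ≤ B.card * m + m * (t - 1) := by omega
        _ = m * (B.card + (t - 1)) := h4
        _ ≤ m * (s - 1) := h6
        _ = (s - 1) * m := Nat.mul_comm _ _
    omega
  -- choose distinct left vertices, graph i gets a vertex of degree ≥ i+1,
  -- chosen in decreasing order of i (via Fin.rev)
  have hA' : ∀ j : Fin s, (j : ℕ) <
      (L.filter fun x => (j.rev : ℕ) + 1 ≤ d j.rev x).card := by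
    intro j
    have hrev : (j.rev : ℕ) = s - ((j : ℕ) + 1) := Fin.val_rev j
    have := key j.rev ((j.rev : ℕ) + 1) (by omega) (by have := j.rev.isLt; omega)
    have hj := j.isLt
    omega
  obtain ⟨f, hf, hfinj⟩ := aux_choose s (fun j => L.filter fun x => (j.rev : ℕ) + 1 ≤ d j.rev x) hA'
  set l : Fin s → α := fun i => f i.rev with hldef
  have hlinj : Function.Injective l := fun i j hij => by
    have := hfinj hij
    exact Fin.rev_injective this
  have hld : ∀ i : Fin s, (i : ℕ) + 1 ≤ d i (l i) := by
    intro i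
    have := hf i.rev
    rw [Fin.rev_rev] at this
    exact (Finset.mem_filter.mp this).2
  -- choose distinct right vertices in increasing order of i
  have hA2 : ∀ i : Fin s, (i : ℕ) <
      (((G i).filter fun e => e.1 = l i).image Prod.snd).card := by
    intro i
    have hinj : Set.InjOn Prod.snd (((G i).filter fun e => e.1 = l i : Finset (α × α)) : Set (α × α)) := by
      intro e he' e' he'' hsnd
      have h1 := (Finset.mem_filter.mp he').2
      have h2 := (Finset.mem_filter.mp he'').2
      exact Prod.ext (h1.trans h2.symm) hsnd
    rw [Finset.card_image_of_injOn hinj]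
    have := hld i
    simp only [hd] at this
    omega
  obtain ⟨r, hr, hrinj⟩ := aux_choose s (fun i => ((G i).filter fun e => e.1 = l i).image Prod.snd) hA2
  have hedge : ∀ i, (l i, r i) ∈ G i := by
    intro i
    obtain ⟨e, he', hesnd⟩ := Finset.mem_image.mp (hr i)
    have h1 := Finset.mem_filter.mp he'
    have : e = (l i, r i) := Prod.ext h1.2 hesnd
    exact this ▸ h1.1
  refine ⟨fun i => (l i, r i), hedge, ?_⟩
  intro i j hij
  exact ⟨fun h => hij (hlinj h), fun h => hij (hrinj h)⟩
end

section
/- Let $\hat{H}$ be the graph on vertex set $\sqcup_{i=1}^\ell \binom{V_i}{k_i}$ (with $|V_i| = n_i \geq 2k_i$ and $n_1/k_1 \leq \dots \leq n_\ell/k_\ell$) whose edges are pairs of disjoint sets. Then $\hat{H}$ is regular of degree $D = \prod_{p=1}^\ell \binom{n_p - k_p}{k_p}$, and its second largest absolute eigenvalue equals $\lambda = \frac{k_1}{n_1 - k_1} \prod_{p=1}^\ell \binom{n_p - k_p}{k_p}$. -/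
open Finset

lemma prod_sub_expand {β : Type*} [DecidableEq β] (I : Finset β) (u v : β → ℝ) :
    ∏ i ∈ I, (u i - v i)
      = ∑ T ∈ I.powerset, (-1 : ℝ)^T.card * ∏ i ∈ I, (if i ∈ T then v i else u i) := by
  have h : ∏ i ∈ I, (u i - v i) = ∏ i ∈ I, ((fun i => -v i) i + u i) := by
    apply Finset.prod_congr rfl; intro i _; ring
  rw [h, Finset.prod_add]
  refine Finset.sum_congr rfl ?_
  intro T hT
  rw [Finset.mem_powerset] at hT
  rw [← Finset.prod_sdiff hT (f := fun i => if i ∈ T then v i else u i)]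
  have h1 : ∏ i ∈ T, (fun i => -v i) i = (-1:ℝ)^T.card * ∏ i ∈ T, v i := by
    rw [show (fun i => -v i) = (fun i => (-1:ℝ) * v i) by ext i; ring, Finset.prod_mul_distrib,
      Finset.prod_const]
  have h2 : ∏ i ∈ T, (if i ∈ T then v i else u i) = ∏ i ∈ T, v i :=
    Finset.prod_congr rfl (fun i hi => if_pos hi)
  have h3 : ∏ i ∈ I \ T, (if i ∈ T then v i else u i) = ∏ i ∈ I \ T, u i :=
    Finset.prod_congr rfl (fun i hi => if_neg (Finset.mem_sdiff.mp hi).2)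
  rw [h1, h2, h3]; ring

lemma prod_ind {β : Type*} [DecidableEq β] (I : Finset β) (P : β → Prop) [DecidablePred P] :
    ∏ i ∈ I, (if P i then (1:ℝ) else 0) = if (∀ i ∈ I, P i) then 1 else 0 := by
  induction I using Finset.induction_on with
  | empty => simp
  | @insert a s ha ih =>
    rw [Finset.prod_insert ha, ih]
    by_cases h1 : P a <;> by_cases h2 : ∀ i ∈ s, P i <;>
      simp [h1, h2, Finset.forall_mem_insert] <;> tauto


section
variable {α : Type*} [Fintype α] [DecidableEq α] {ℓ : ℕ} (n k : Fin ℓ → ℕ) (V : Fin ℓ → Finset α)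

lemma master_count
    (hV : ∀ i j, i ≠ j → Disjoint (V i) (V j)) (hVcard : ∀ i, (V i).card = n i)
    (A : {A : Finset α // A ⊆ Finset.univ.biUnion V ∧ ∀ i, (A ∩ V i).card = k i})
    (Z : Finset α) (hZV : Z ⊆ Finset.univ.biUnion V)
    (m : Fin ℓ → ℕ) (hZm : ∀ p, (Z ∩ V p).card = m p) (hmk : ∀ p, m p ≤ k p)
    (hZA : Disjoint Z A.1) :
    (Finset.univ.filter
      (fun B : {A : Finset α // A ⊆ Finset.univ.biUnion V ∧ ∀ i, (A ∩ V i).card = k i} =>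
        Disjoint A.1 B.1 ∧ Z ⊆ B.1)).card
      = ∏ p, (n p - k p - m p).choose (k p - m p) := by
  classical
  rw [← Fintype.card_subtype]
  have e : {B : {A : Finset α // A ⊆ Finset.univ.biUnion V ∧ ∀ i, (A ∩ V i).card = k i} //
      Disjoint A.1 B.1 ∧ Z ⊆ B.1}
      ≃ (∀ p, {s : Finset α // s ∈ (V p \ (A.1 ∪ Z)).powersetCard (k p - m p)}) := by
    refine
      { toFun := fun B p => ⟨(B.1.1 \ Z) ∩ V p, ?_⟩
        invFun := fun σ => ⟨⟨Z ∪ Finset.univ.biUnion (fun p => (σ p).1), ?_, ?_⟩, ?_, ?_⟩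
        left_inv := ?_
        right_inv := ?_ }
    · -- membership in powersetCard
      obtain ⟨⟨B, hBV, hBcard⟩, hdisj, hZB⟩ := B
      rw [Finset.mem_powersetCard]
      constructor
      · intro x hx
        simp only [Finset.mem_inter, Finset.mem_sdiff, Finset.mem_union] at hx ⊢
        refine ⟨hx.2, ?_⟩
        push_neg
        exact ⟨fun hxA => (Finset.disjoint_left.mp hdisj) hxA hx.1.1, hx.1.2⟩
      · have h1 : (B \ Z) ∩ V p = (B ∩ V p) \ (Z ∩ V p) := by
          ext x; simp only [Finset.mem_inter, Finset.mem_sdiff]; tauto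
        rw [h1, Finset.card_sdiff_of_subset (by exact Finset.inter_subset_inter_right hZB),
          hBcard, hZm]
    · -- subset of biUnion
      intro x hx
      rcases Finset.mem_union.mp hx with h | h
      · exact hZV h
      · obtain ⟨p, _, hp⟩ := Finset.mem_biUnion.mp h
        exact Finset.mem_biUnion.mpr ⟨p, Finset.mem_univ p,
          (Finset.mem_sdiff.mp ((Finset.mem_powersetCard.mp (σ p).2).1 hp)).1⟩
    · -- card of intersections
      intro p
      have hq : ∀ q, q ≠ p → (σ q).1 ∩ V p = ∅ := by
        intro q hqp
        have hsub : (σ q).1 ⊆ V q := fun x hx =>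
          (Finset.mem_sdiff.mp ((Finset.mem_powersetCard.mp (σ q).2).1 hx)).1
        apply Finset.eq_empty_of_forall_notMem
        intro x hx
        rcases Finset.mem_inter.mp hx with ⟨h1, h2⟩
        exact (Finset.disjoint_left.mp (hV q p hqp)) (hsub h1) h2
      have hsplit : (Z ∪ Finset.univ.biUnion (fun q => (σ q).1)) ∩ V p
          = (Z ∩ V p) ∪ (σ p).1 := by
        ext x
        simp only [Finset.mem_inter, Finset.mem_union, Finset.mem_biUnion]
        constructor
        · rintro ⟨h | ⟨q, _, hq'⟩, hxp⟩
          · exact Or.inl ⟨h, hxp⟩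
          · rcases eq_or_ne q p with rfl | hne
            · exact Or.inr hq'
            · exact absurd (Finset.mem_inter.mpr ⟨hq', hxp⟩) (by rw [hq q hne]; simp)
        · rintro (⟨h1, h2⟩ | h)
          · exact ⟨Or.inl h1, h2⟩
          · have hsub := (Finset.mem_powersetCard.mp (σ p).2).1 h
            exact ⟨Or.inr ⟨p, Finset.mem_univ p, h⟩, (Finset.mem_sdiff.mp hsub).1⟩
      rw [hsplit, Finset.card_union_of_disjoint, hZm]
      · have := (Finset.mem_powersetCard.mp (σ p).2).2
        rw [this]
        have := hmk p
        omega
      · rw [Finset.disjoint_left]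
        intro x hx1 hx2
        have := (Finset.mem_powersetCard.mp (σ p).2).1 hx2
        rw [Finset.mem_sdiff] at this
        exact this.2 (Finset.mem_union.mpr (Or.inr (Finset.mem_inter.mp hx1).1))
    · -- Disjoint A.1 B
      rw [Finset.disjoint_right]
      intro x hx hxA
      rcases Finset.mem_union.mp hx with h | h
      · exact (Finset.disjoint_left.mp hZA) h hxA
      · obtain ⟨p, _, hp⟩ := Finset.mem_biUnion.mp h
        have := (Finset.mem_powersetCard.mp (σ p).2).1 hp
        rw [Finset.mem_sdiff, Finset.mem_union] at this
        exact this.2 (Or.inl hxA)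
    · exact Finset.subset_union_left
    · -- left_inv
      rintro ⟨⟨B, hBV, hBcard⟩, hdisj, hZB⟩
      apply Subtype.ext; apply Subtype.ext
      show Z ∪ Finset.univ.biUnion (fun p => (B \ Z) ∩ V p) = B
      ext x
      simp only [Finset.mem_union, Finset.mem_biUnion, Finset.mem_inter, Finset.mem_sdiff]
      constructor
      · rintro (h | ⟨p, _, ⟨hxB, _⟩, _⟩)
        · exact hZB h
        · exact hxB
      · intro hxB
        by_cases hxZ : x ∈ Z
        · exact Or.inl hxZ
        · obtain ⟨p, _, hp⟩ := Finset.mem_biUnion.mp (hBV hxB)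
          exact Or.inr ⟨p, Finset.mem_univ p, ⟨hxB, hxZ⟩, hp⟩
    · -- right_inv
      intro σ
      funext p
      apply Subtype.ext
      show ((Z ∪ Finset.univ.biUnion (fun q => (σ q).1)) \ Z) ∩ V p = (σ p).1
      ext x
      simp only [Finset.mem_inter, Finset.mem_sdiff, Finset.mem_union, Finset.mem_biUnion]
      constructor
      · rintro ⟨⟨h | ⟨q, _, hq⟩, hxZ⟩, hxp⟩
        · exact absurd h hxZ
        · rcases eq_or_ne q p with rfl | hne
          · exact hq
          · have hsub : (σ q).1 ⊆ V q := fun y hy =>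
              (Finset.mem_sdiff.mp ((Finset.mem_powersetCard.mp (σ q).2).1 hy)).1
            exact absurd hxp (Finset.disjoint_left.mp (hV q p hne) (hsub hq))
      · intro hx
        have hsub := (Finset.mem_powersetCard.mp (σ p).2).1 hx
        rw [Finset.mem_sdiff, Finset.mem_union] at hsub
        push_neg at hsub
        exact ⟨⟨Or.inr ⟨p, Finset.mem_univ p, hx⟩, hsub.2.2⟩, hsub.1⟩
  rw [Fintype.card_congr e, Fintype.card_pi]
  refine Finset.prod_congr rfl ?_
  intro p _
  rw [Fintype.card_coe, Finset.card_powersetCard]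
  congr 1
  have h1 : V p \ (A.1 ∪ Z) = V p \ ((A.1 ∩ V p) ∪ (Z ∩ V p)) := by
    ext x; simp only [Finset.mem_sdiff, Finset.mem_union, Finset.mem_inter]; tauto
  rw [h1, Finset.card_sdiff_of_subset, Finset.card_union_of_disjoint, A.2.2 p, hZm, hVcard]
  · omega
  · exact Finset.disjoint_of_subset_left Finset.inter_subset_left
      (Finset.disjoint_of_subset_right Finset.inter_subset_left hZA.symm)
  · intro x hx
    rcases Finset.mem_union.mp hx with h | h
    · exact (Finset.mem_inter.mp h).2
    · exact (Finset.mem_inter.mp h).2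

end


section
variable {α : Type*} [Fintype α] [DecidableEq α] {ℓ : ℕ}

/-- the vertex subtype -/
abbrev KX (V : Fin ℓ → Finset α) (k : Fin ℓ → ℕ) :=
  {A : Finset α // A ⊆ Finset.univ.biUnion V ∧ ∀ i, (A ∩ V i).card = k i}

/-- difference-product function -/
def pairFun (I : Finset (α × α)) (C : Finset α) : ℝ :=
  ∏ ab ∈ I, ((if ab.1 ∈ C then (1:ℝ) else 0) - (if ab.2 ∈ C then 1 else 0))

/-- validity of a configuration (base set `S`, pair system `I`) -/
def Valid (V : Fin ℓ → Finset α) (k : Fin ℓ → ℕ) (S : Finset α) (I : Finset (α × α)) : Prop :=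
  S ⊆ Finset.univ.biUnion V ∧
  (∀ ab ∈ I, ∃ p, ab.1 ∈ V p ∧ ab.2 ∈ V p) ∧
  (∀ ab ∈ I, ab.1 ≠ ab.2) ∧
  (∀ ab ∈ I, ∀ cd ∈ I, ab ≠ cd → ({ab.1, ab.2} : Finset α) ∩ {cd.1, cd.2} = ∅) ∧
  (∀ ab ∈ I, ab.1 ∉ S ∧ ab.2 ∉ S) ∧
  (∀ p, (S ∩ V p).card + (I.filter (fun ab => ab.1 ∈ V p)).card ≤ k p)

variable {V : Fin ℓ → Finset α} {k : Fin ℓ → ℕ}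

lemma mem_unique_coord (hV : ∀ i j, i ≠ j → Disjoint (V i) (V j)) {x : α} {p q : Fin ℓ}
    (hp : x ∈ V p) (hq : x ∈ V q) : p = q := by
  by_contra h
  exact (Finset.disjoint_left.mp (hV p q h)) hp hq

/-- the chosen point of a pair, relative to `T` -/
def chosenPt (T : Finset (α × α)) (ab : α × α) : α := if ab ∈ T then ab.2 else ab.1

lemma chosenPt_injOn {S : Finset α} {I : Finset (α × α)} (hval : Valid V k S I)
    (T : Finset (α × α)) : Set.InjOn (chosenPt T) I := by
  intro ab hab cd hcd h
  by_contra hne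
  have hd := hval.2.2.2.1 ab hab cd hcd hne
  have h1 : chosenPt T ab ∈ ({ab.1, ab.2} : Finset α) := by
    unfold chosenPt; split <;> simp
  have h2 : chosenPt T ab ∈ ({cd.1, cd.2} : Finset α) := by
    rw [h]; unfold chosenPt; split <;> simp
  have := Finset.mem_inter.mpr ⟨h1, h2⟩
  rw [hd] at this
  exact absurd this (Finset.notMem_empty _)

lemma chosenPt_mem_coord {S : Finset α} {I : Finset (α × α)} (hval : Valid V k S I)
    (hV : ∀ i j, i ≠ j → Disjoint (V i) (V j))
    (T : Finset (α × α)) {ab : α × α} (hab : ab ∈ I) {p : Fin ℓ} :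
    chosenPt T ab ∈ V p ↔ ab.1 ∈ V p := by
  obtain ⟨q, hq1, hq2⟩ := hval.2.1 ab hab
  have hc : chosenPt T ab ∈ V q := by unfold chosenPt; split <;> assumption
  constructor
  · intro h; rwa [mem_unique_coord hV h hc]
  · intro h; rw [mem_unique_coord hV h hq1]; exact hc

/-- cardinality of the chosen-point set in each coordinate -/
lemma chosen_card {S : Finset α} {I : Finset (α × α)} (hval : Valid V k S I)
    (hV : ∀ i j, i ≠ j → Disjoint (V i) (V j)) (T : Finset (α × α)) (p : Fin ℓ) :
    (I.image (chosenPt T) ∩ V p).card = (I.filter (fun ab => ab.1 ∈ V p)).card := by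
  have h1 : I.image (chosenPt T) ∩ V p = (I.filter (fun ab => ab.1 ∈ V p)).image (chosenPt T) := by
    ext x
    simp only [Finset.mem_inter, Finset.mem_image, Finset.mem_filter]
    constructor
    · rintro ⟨⟨ab, hab, rfl⟩, hx⟩
      exact ⟨ab, ⟨hab, (chosenPt_mem_coord hval hV T hab).mp hx⟩, rfl⟩
    · rintro ⟨ab, ⟨hab, h⟩, rfl⟩
      exact ⟨⟨ab, hab, rfl⟩, (chosenPt_mem_coord hval hV T hab).mpr h⟩
  rw [h1, Finset.card_image_of_injOn ((chosenPt_injOn hval T).mono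
    (by intro x hx; exact Finset.mem_filter.mp hx |>.1))]

lemma chosen_subset {S : Finset α} {I : Finset (α × α)} (hval : Valid V k S I)
    (T : Finset (α × α)) : I.image (chosenPt T) ⊆ Finset.univ.biUnion V := by
  intro x hx
  obtain ⟨ab, hab, rfl⟩ := Finset.mem_image.mp hx
  obtain ⟨q, hq1, hq2⟩ := hval.2.1 ab hab
  refine Finset.mem_biUnion.mpr ⟨q, Finset.mem_univ q, ?_⟩
  unfold chosenPt; split <;> assumption

end

section
variable {α : Type*} [Fintype α] [DecidableEq α] {ℓ : ℕ}
variable {V : Fin ℓ → Finset α} {k : Fin ℓ → ℕ}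

lemma pairFun_expand (I : Finset (α × α)) (B : Finset α) :
    pairFun I B = ∑ T ∈ I.powerset, (-1:ℝ)^T.card *
      (if I.image (chosenPt T) ⊆ B then (1:ℝ) else 0) := by
  rw [pairFun, prod_sub_expand]
  refine Finset.sum_congr rfl fun T hT => ?_
  congr 1
  have h1 : ∏ ab ∈ I, (if ab ∈ T then (if ab.2 ∈ B then (1:ℝ) else 0)
      else (if ab.1 ∈ B then (1:ℝ) else 0))
      = ∏ ab ∈ I, (if chosenPt T ab ∈ B then (1:ℝ) else 0) := by
    refine Finset.prod_congr rfl fun ab _ => ?_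
    unfold chosenPt; split <;> rfl
  rw [h1, prod_ind]
  congr 1
  · simp only [eq_iff_iff]
    exact (Finset.image_subset_iff).symm

lemma indicator_disjoint (I : Finset (α × α)) (T : Finset (α × α)) (A : Finset α) :
    (if Disjoint (I.image (chosenPt T)) A then (1:ℝ) else 0)
      = ∏ ab ∈ I, (if ab ∈ T then (1 - (if ab.2 ∈ A then (1:ℝ) else 0))
          else (1 - (if ab.1 ∈ A then (1:ℝ) else 0))) := by
  have h1 : ∏ ab ∈ I, (if ab ∈ T then (1 - (if ab.2 ∈ A then (1:ℝ) else 0))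
      else (1 - (if ab.1 ∈ A then (1:ℝ) else 0)))
      = ∏ ab ∈ I, (if chosenPt T ab ∉ A then (1:ℝ) else 0) := by
    refine Finset.prod_congr rfl fun ab _ => ?_
    unfold chosenPt
    by_cases h : ab ∈ T <;> simp only [h, if_true, if_false] <;> split <;> simp_all
  rw [h1, prod_ind]
  congr 1
  simp only [eq_iff_iff, Finset.disjoint_left]
  constructor
  · intro h ab hab
    exact h (Finset.mem_image_of_mem _ hab)
  · intro h x hx
    obtain ⟨ab, hab, rfl⟩ := Finset.mem_image.mp hx
    exact h ab hab

lemma eigen_lemma (n : Fin ℓ → ℕ)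
    (hV : ∀ i j, i ≠ j → Disjoint (V i) (V j)) (hVcard : ∀ i, (V i).card = n i)
    {I : Finset (α × α)} (hval : Valid V k ∅ I) (A : KX V k) :
    ∑ B : KX V k, (if Disjoint A.1 B.1 then (1:ℝ) else 0) * pairFun I B.1
      = ((-1:ℝ)^I.card *
          ∏ p, ((n p - k p - (I.filter (fun ab => ab.1 ∈ V p)).card).choose
            (k p - (I.filter (fun ab => ab.1 ∈ V p)).card) : ℝ)) * pairFun I A.1 := by
  classical
  set m : Fin ℓ → ℕ := fun p => (I.filter (fun ab => ab.1 ∈ V p)).card with hm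
  set c : ℝ := ∏ p, ((n p - k p - m p).choose (k p - m p) : ℝ) with hc
  have hmk : ∀ p, m p ≤ k p := by
    intro p
    have := hval.2.2.2.2.2 p
    simpa using this
  -- rewrite LHS
  have step : ∀ T ∈ I.powerset,
      (∑ B : KX V k, (if Disjoint A.1 B.1 then (1:ℝ) else 0) *
        (if I.image (chosenPt T) ⊆ B.1 then (1:ℝ) else 0))
      = (if Disjoint (I.image (chosenPt T)) A.1 then c else 0) := by
    intro T _
    have h1 : ∀ B : KX V k, (if Disjoint A.1 B.1 then (1:ℝ) else 0) *
        (if I.image (chosenPt T) ⊆ B.1 then (1:ℝ) else 0)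
        = (if Disjoint A.1 B.1 ∧ I.image (chosenPt T) ⊆ B.1 then (1:ℝ) else 0) := by
      intro B
      by_cases h1 : Disjoint A.1 B.1 <;> by_cases h2 : I.image (chosenPt T) ⊆ B.1 <;>
        simp [h1, h2]
    rw [Finset.sum_congr rfl (fun B _ => h1 B), Finset.sum_boole]
    by_cases hd : Disjoint (I.image (chosenPt T)) A.1
    · rw [if_pos hd]
      rw [master_count n k V hV hVcard A (I.image (chosenPt T)) (chosen_subset hval T)
        m (chosen_card hval hV T) hmk hd.symm.symm]
      · rw [hc]; push_cast; ring
    · rw [if_neg hd]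
      have : Finset.univ.filter
          (fun B : KX V k => Disjoint A.1 B.1 ∧ I.image (chosenPt T) ⊆ B.1) = ∅ := by
        rw [Finset.filter_eq_empty_iff]
        rintro B _ ⟨h1, h2⟩
        exact hd (Finset.disjoint_left.mpr fun x hx => fun hxA =>
          (Finset.disjoint_left.mp h1) hxA (h2 hx))
      rw [this]; simp
  calc ∑ B : KX V k, (if Disjoint A.1 B.1 then (1:ℝ) else 0) * pairFun I B.1
      = ∑ B : KX V k, ∑ T ∈ I.powerset, (-1:ℝ)^T.card *
          ((if Disjoint A.1 B.1 then (1:ℝ) else 0) *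
            (if I.image (chosenPt T) ⊆ B.1 then (1:ℝ) else 0)) := by
        refine Finset.sum_congr rfl fun B _ => ?_
        rw [pairFun_expand, Finset.mul_sum]
        refine Finset.sum_congr rfl fun T _ => ?_
        ring
    _ = ∑ T ∈ I.powerset, (-1:ℝ)^T.card *
          (∑ B : KX V k, (if Disjoint A.1 B.1 then (1:ℝ) else 0) *
            (if I.image (chosenPt T) ⊆ B.1 then (1:ℝ) else 0)) := by
        rw [Finset.sum_comm]
        refine Finset.sum_congr rfl fun T _ => ?_
        rw [Finset.mul_sum]
    _ = ∑ T ∈ I.powerset, (-1:ℝ)^T.card *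
          (if Disjoint (I.image (chosenPt T)) A.1 then c else 0) := by
        exact Finset.sum_congr rfl fun T hT => by rw [step T hT]
    _ = c * ∑ T ∈ I.powerset, (-1:ℝ)^T.card *
          (if Disjoint (I.image (chosenPt T)) A.1 then (1:ℝ) else 0) := by
        rw [Finset.mul_sum]
        refine Finset.sum_congr rfl fun T _ => ?_
        by_cases hd : Disjoint (I.image (chosenPt T)) A.1 <;> simp [hd] <;> ring
    _ = c * ∑ T ∈ I.powerset, (-1:ℝ)^T.card *
          ∏ ab ∈ I, (if ab ∈ T then ((1:ℝ) - (if ab.2 ∈ A.1 then (1:ℝ) else 0))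
            else ((1:ℝ) - (if ab.1 ∈ A.1 then (1:ℝ) else 0))) := by
        congr 1
        exact Finset.sum_congr rfl fun T _ => by rw [indicator_disjoint]
    _ = c * ∏ ab ∈ I, (((1:ℝ) - (if ab.1 ∈ A.1 then (1:ℝ) else 0))
            - ((1:ℝ) - (if ab.2 ∈ A.1 then (1:ℝ) else 0))) := by
        rw [← prod_sub_expand]
    _ = c * ((-1:ℝ)^I.card * pairFun I A.1) := by
        congr 1
        have h1 : ∏ ab ∈ I, (((1:ℝ) - (if ab.1 ∈ A.1 then (1:ℝ) else 0))
            - ((1:ℝ) - (if ab.2 ∈ A.1 then (1:ℝ) else 0)))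
            = ∏ ab ∈ I, ((-1:ℝ) * ((if ab.1 ∈ A.1 then (1:ℝ) else 0)
              - (if ab.2 ∈ A.1 then (1:ℝ) else 0))) := by
          refine Finset.prod_congr rfl fun ab _ => by ring
        rw [h1, Finset.prod_mul_distrib, Finset.prod_const, pairFun]
    _ = ((-1:ℝ)^I.card * c) * pairFun I A.1 := by ring

end
section
variable {α : Type*} [Fintype α] [DecidableEq α] {ℓ : ℕ}
variable {V : Fin ℓ → Finset α} {k : Fin ℓ → ℕ}

/-- the weighted sum `Φ` -/
def Phi (V : Fin ℓ → Finset α) (k : Fin ℓ → ℕ) (g : KX V k → ℝ)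
    (S : Finset α) (I : Finset (α × α)) : ℝ :=
  ∑ C : KX V k, (if S ⊆ C.1 then (1:ℝ) else 0) * (pairFun I C.1 * g C)

lemma ind_insert (a : α) (S C : Finset α) :
    (if insert a S ⊆ C then (1:ℝ) else 0)
      = (if S ⊆ C then (1:ℝ) else 0) * (if a ∈ C then (1:ℝ) else 0) := by
  by_cases h1 : S ⊆ C <;> by_cases h2 : a ∈ C <;>
    simp [h1, h2, Finset.insert_subset_iff]

lemma valid_erase {S : Finset α} {I : Finset (α × α)} (hval : Valid V k S I) (s₀ : α) :
    Valid V k (S.erase s₀) I := by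
  obtain ⟨h1, h2, h3, h4, h5, h6⟩ := hval
  refine ⟨(Finset.erase_subset _ _).trans h1, h2, h3, h4, ?_, ?_⟩
  · intro ab hab
    have := h5 ab hab
    exact ⟨fun h => this.1 (Finset.mem_of_mem_erase h),
      fun h => this.2 (Finset.mem_of_mem_erase h)⟩
  · intro p
    have hsub : S.erase s₀ ∩ V p ⊆ S ∩ V p :=
      Finset.inter_subset_inter (Finset.erase_subset _ _) (le_refl _)
    have := h6 p
    have := Finset.card_le_card hsub
    omega

lemma phi_sum_insert (g : KX V k → ℝ) (S' : Finset α) (I : Finset (α × α)) (q : Fin ℓ) :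
    ∑ w ∈ V q \ S', Phi V k g (insert w S') I
      = ((k q - (S' ∩ V q).card : ℕ) : ℝ) * Phi V k g S' I := by
  unfold Phi
  rw [Finset.sum_comm, Finset.mul_sum]
  refine Finset.sum_congr rfl fun C _ => ?_
  have key : ∑ w ∈ V q \ S', (if insert w S' ⊆ C.1 then (1:ℝ) else 0)
      = ((k q - (S' ∩ V q).card : ℕ) : ℝ) * (if S' ⊆ C.1 then (1:ℝ) else 0) := by
    have h1 : ∀ w, (if insert w S' ⊆ C.1 then (1:ℝ) else 0)
        = (if S' ⊆ C.1 then (1:ℝ) else 0) * (if w ∈ C.1 then (1:ℝ) else 0) :=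
      fun w => ind_insert w S' C.1
    rw [Finset.sum_congr rfl (fun w _ => h1 w), ← Finset.mul_sum]
    by_cases hC : S' ⊆ C.1
    · rw [if_pos hC, one_mul, mul_one, Finset.sum_boole, Finset.filter_mem_eq_inter]
      congr 1
      have h2 : (V q \ S') ∩ C.1 = (C.1 ∩ V q) \ (S' ∩ V q) := by
        ext x
        simp only [Finset.mem_inter, Finset.mem_sdiff]
        tauto
      rw [h2, Finset.card_sdiff_of_subset (Finset.inter_subset_inter hC (le_refl _)), C.2.2 q]
    · rw [if_neg hC]
      simp
  rw [← Finset.sum_mul, key]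
  ring

lemma phi_pair (g : KX V k → ℝ) (S' : Finset α) {I : Finset (α × α)} {ab : α × α}
    (hab : ab ∈ I) :
    Phi V k g (insert ab.1 S') I + Phi V k g (insert ab.2 S') I = Phi V k g S' I := by
  unfold Phi
  rw [← Finset.sum_add_distrib]
  refine Finset.sum_congr rfl fun C _ => ?_
  rw [ind_insert, ind_insert]
  have hsplit : pairFun I C.1
      = ((if ab.1 ∈ C.1 then (1:ℝ) else 0) - (if ab.2 ∈ C.1 then (1:ℝ) else 0)) *
        pairFun (I.erase ab) C.1 := by
    rw [pairFun, pairFun]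
    exact (Finset.mul_prod_erase _ _ hab).symm
  rw [hsplit]
  by_cases h1 : ab.1 ∈ C.1 <;> by_cases h2 : ab.2 ∈ C.1 <;> simp [h1, h2] <;> ring

lemma phi_insert_pair (g : KX V k → ℝ) (S' : Finset α) {I : Finset (α × α)}
    (s₀ w : α) (hnot : (s₀, w) ∉ I) :
    Phi V k g S' (insert (s₀, w) I)
      = Phi V k g (insert s₀ S') I - Phi V k g (insert w S') I := by
  unfold Phi
  rw [← Finset.sum_sub_distrib]
  refine Finset.sum_congr rfl fun C _ => ?_
  rw [ind_insert, ind_insert]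
  have hsplit : pairFun (insert (s₀, w) I) C.1
      = ((if s₀ ∈ C.1 then (1:ℝ) else 0) - (if w ∈ C.1 then (1:ℝ) else 0)) *
        pairFun I C.1 := by
    rw [pairFun, pairFun, Finset.prod_insert hnot]
  rw [hsplit]
  ring

lemma valid_step {S : Finset α} {I : Finset (α × α)} (hval : Valid V k S I)
    (hV : ∀ i j, i ≠ j → Disjoint (V i) (V j))
    {s₀ w : α} {q : Fin ℓ} (hs₀ : s₀ ∈ S) (hs₀q : s₀ ∈ V q) (hwq : w ∈ V q)
    (hwS : w ∉ S) (hwpts : w ∉ I.biUnion (fun ab => ({ab.1, ab.2} : Finset α)))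
    (hws₀ : w ≠ s₀) :
    Valid V k (S.erase s₀) (insert (s₀, w) I) := by
  obtain ⟨h1, h2, h3, h4, h5, h6⟩ := hval
  have hs₀pts : ∀ cd ∈ I, cd.1 ≠ s₀ ∧ cd.2 ≠ s₀ := by
    intro cd hcd
    have := h5 cd hcd
    exact ⟨fun h => this.1 (h ▸ hs₀), fun h => this.2 (h ▸ hs₀)⟩
  have hnotI : (s₀, w) ∉ I := fun h => (hs₀pts _ h).1 rfl
  have hdisj_new_old : ∀ cd ∈ I, ({s₀, w} : Finset α) ∩ {cd.1, cd.2} = ∅ := by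
    intro cd hcd
    apply Finset.eq_empty_of_forall_notMem
    intro x hx
    rcases Finset.mem_inter.mp hx with ⟨hx1, hx2⟩
    rcases Finset.mem_insert.mp hx1 with rfl | hx1
    · rcases Finset.mem_insert.mp hx2 with h | h
      · exact (hs₀pts cd hcd).1 h.symm
      · exact (hs₀pts cd hcd).2 (Finset.mem_singleton.mp h).symm
    · rw [Finset.mem_singleton] at hx1
      subst hx1
      exact hwpts (Finset.mem_biUnion.mpr ⟨cd, hcd, hx2⟩)
  refine ⟨(Finset.erase_subset _ _).trans h1, ?_, ?_, ?_, ?_, ?_⟩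
  · intro ab hab
    rcases Finset.mem_insert.mp hab with rfl | hab
    · exact ⟨q, hs₀q, hwq⟩
    · exact h2 ab hab
  · intro ab hab
    rcases Finset.mem_insert.mp hab with rfl | hab
    · exact fun h => hws₀ h.symm
    · exact h3 ab hab
  · intro ab hab cd hcd hne
    rcases Finset.mem_insert.mp hab with rfl | hab <;>
      rcases Finset.mem_insert.mp hcd with h' | hcd'
    · exact absurd h'.symm hne
    · exact hdisj_new_old cd hcd'
    · subst h'
      rw [Finset.inter_comm]
      exact hdisj_new_old ab hab
    · exact h4 ab hab cd hcd' hne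
  · intro ab hab
    rcases Finset.mem_insert.mp hab with rfl | hab
    · exact ⟨Finset.notMem_erase _ _, fun h => hwS (Finset.mem_of_mem_erase h)⟩
    · have := h5 ab hab
      exact ⟨fun h => this.1 (Finset.mem_of_mem_erase h),
        fun h => this.2 (Finset.mem_of_mem_erase h)⟩
  · intro p
    have hnotfil : (s₀, w) ∉ I.filter (fun ab => ab.1 ∈ V p) :=
      fun h => hnotI (Finset.mem_filter.mp h).1
    rw [Finset.filter_insert]
    by_cases hp : s₀ ∈ V p
    · rw [if_pos hp, Finset.card_insert_of_notMem hnotfil]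
      have hmem : s₀ ∈ S ∩ V p := Finset.mem_inter.mpr ⟨hs₀, hp⟩
      have herase : S.erase s₀ ∩ V p = (S ∩ V p).erase s₀ := by
        ext x
        simp only [Finset.mem_inter, Finset.mem_erase]
        tauto
      rw [herase, Finset.card_erase_of_mem hmem]
      have := h6 p
      have hpos : 0 < (S ∩ V p).card := Finset.card_pos.mpr ⟨s₀, hmem⟩
      omega
    · rw [if_neg hp]
      have hsub : S.erase s₀ ∩ V p ⊆ S ∩ V p :=
        Finset.inter_subset_inter (Finset.erase_subset _ _) (le_refl _)
      have := h6 p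
      have := Finset.card_le_card hsub
      omega

end
section
variable {α : Type*} [Fintype α] [DecidableEq α] {ℓ : ℕ}
variable {V : Fin ℓ → Finset α} {k : Fin ℓ → ℕ}

lemma kx_card (hV : ∀ i j, i ≠ j → Disjoint (V i) (V j)) (C : KX V k) :
    C.1.card = ∑ p, k p := by
  have h1 : C.1 = Finset.univ.biUnion (fun p => C.1 ∩ V p) := by
    ext x
    simp only [Finset.mem_biUnion, Finset.mem_inter]
    constructor
    · intro hx
      obtain ⟨p, _, hp⟩ := Finset.mem_biUnion.mp (C.2.1 hx)
      exact ⟨p, Finset.mem_univ p, hx, hp⟩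
    · rintro ⟨p, _, hx, _⟩
      exact hx
  conv_lhs => rw [h1]
  rw [Finset.card_biUnion]
  · exact Finset.sum_congr rfl fun p _ => C.2.2 p
  · intro p _ q _ hpq
    exact Finset.disjoint_of_subset_left Finset.inter_subset_right
      (Finset.disjoint_of_subset_right Finset.inter_subset_right (hV p q hpq))

lemma phi_zero (hV : ∀ i j, i ≠ j → Disjoint (V i) (V j)) (g : KX V k → ℝ)
    (hg : ∀ I, Valid V k ∅ I → Phi V k g ∅ I = 0) :
    ∀ N (S : Finset α) (I : Finset (α × α)), S.card ≤ N → Valid V k S I →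
      Phi V k g S I = 0 := by
  intro N
  induction N with
  | zero =>
    intro S I hcard hval
    have : S = ∅ := Finset.card_eq_zero.mp (Nat.le_zero.mp hcard)
    subst this
    exact hg I hval
  | succ N IH =>
    intro S I hcard hval
    rcases Finset.eq_empty_or_nonempty S with rfl | ⟨s₀, hs₀⟩
    · exact hg I hval
    obtain ⟨q, _, hs₀q⟩ := Finset.mem_biUnion.mp (hval.1 hs₀)
    set S' := S.erase s₀ with hS'
    have hScard' : S'.card ≤ N := by
      rw [hS', Finset.card_erase_of_mem hs₀]
      omega
    have hvalS' : Valid V k S' I := valid_erase hval s₀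
    have hPhiS' : Phi V k g S' I = 0 := IH S' I hScard' hvalS'
    have hSins : insert s₀ S' = S := Finset.insert_erase hs₀
    set pts : Finset α := I.biUnion (fun ab => ({ab.1, ab.2} : Finset α)) with hptsdef
    have hptsS : ∀ x ∈ pts, x ∉ S := by
      intro x hx
      obtain ⟨ab, hab, hxab⟩ := Finset.mem_biUnion.mp hx
      rcases Finset.mem_insert.mp hxab with rfl | hxab
      · exact (hval.2.2.2.2.1 ab hab).1
      · rw [Finset.mem_singleton] at hxab
        subst hxab
        exact (hval.2.2.2.2.1 ab hab).2
    set Uq : Finset α := V q \ (S ∪ pts) with hUqdef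
    have hUphi : ∀ w ∈ Uq, Phi V k g (insert w S') I = Phi V k g S I := by
      intro w hw
      rw [hUqdef, Finset.mem_sdiff, Finset.mem_union] at hw
      obtain ⟨hwq, hw2⟩ := hw
      push_neg at hw2
      have hws₀ : w ≠ s₀ := fun h => hw2.1 (h ▸ hs₀)
      have hvstep := valid_step hval hV hs₀ hs₀q hwq hw2.1 hw2.2 hws₀
      have h0 : Phi V k g S' (insert (s₀, w) I) = 0 := IH S' _ hScard' hvstep
      have hnotI : (s₀, w) ∉ I := fun h => (hval.2.2.2.2.1 _ h).1 hs₀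
      rw [phi_insert_pair g S' s₀ w hnotI, hSins] at h0
      linarith
    have hkey := phi_sum_insert g S' I q
    set Fq := I.filter (fun ab => ab.1 ∈ V q) with hFqdef
    have hdecomp : V q \ S' = Uq ∪ {s₀} ∪ Fq.biUnion (fun ab => ({ab.1, ab.2} : Finset α)) := by
      ext x
      simp only [Finset.mem_sdiff, Finset.mem_union, Finset.mem_singleton, Finset.mem_biUnion]
      constructor
      · rintro ⟨hxq, hxS'⟩
        by_cases hxS : x ∈ S
        · have : x = s₀ := by
            by_contra hne
            exact hxS' (Finset.mem_erase.mpr ⟨hne, hxS⟩)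
          exact Or.inl (Or.inr this)
        by_cases hxpts : x ∈ pts
        · obtain ⟨ab, hab, hxab⟩ := Finset.mem_biUnion.mp hxpts
          obtain ⟨p, hp1, hp2⟩ := hval.2.1 ab hab
          have hxp : x ∈ V p := by
            rcases Finset.mem_insert.mp hxab with rfl | h
            · exact hp1
            · rw [Finset.mem_singleton] at h
              subst h
              exact hp2
          have hpq : p = q := mem_unique_coord hV hxp hxq
          refine Or.inr ⟨ab, Finset.mem_filter.mpr ⟨hab, hpq ▸ hp1⟩, hxab⟩
        · refine Or.inl (Or.inl ?_)
          rw [hUqdef, Finset.mem_sdiff, Finset.mem_union]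
          exact ⟨hxq, by tauto⟩
      · rintro (hx | ⟨ab, habF, hxab⟩)
        · rcases hx with hx | rfl
          · rw [hUqdef, Finset.mem_sdiff, Finset.mem_union] at hx
            push_neg at hx
            exact ⟨hx.1, fun h => hx.2.1 (Finset.mem_of_mem_erase h)⟩
          · exact ⟨hs₀q, Finset.notMem_erase _ _⟩
        · obtain ⟨hab, habq⟩ := Finset.mem_filter.mp habF
          obtain ⟨p, hp1, hp2⟩ := hval.2.1 ab hab
          have hpq : p = q := mem_unique_coord hV hp1 habq
          have hxpts : x ∈ pts := Finset.mem_biUnion.mpr ⟨ab, hab, hxab⟩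
          refine ⟨?_, fun h => hptsS x hxpts (Finset.mem_of_mem_erase h)⟩
          rcases Finset.mem_insert.mp hxab with rfl | h
          · exact habq
          · rw [Finset.mem_singleton] at h
            subst h
            exact hpq ▸ hp2
    have hd2 : Disjoint Uq ({s₀} : Finset α) := by
      rw [Finset.disjoint_singleton_right, hUqdef, Finset.mem_sdiff, Finset.mem_union]
      push_neg
      intro _
      exact Or.inl hs₀
    have hd1 : Disjoint (Uq ∪ {s₀}) (Fq.biUnion (fun ab => ({ab.1, ab.2} : Finset α))) := by
      rw [Finset.disjoint_right]
      intro x hx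
      obtain ⟨ab, habF, hxab⟩ := Finset.mem_biUnion.mp hx
      have hxpts : x ∈ pts :=
        Finset.mem_biUnion.mpr ⟨ab, (Finset.mem_filter.mp habF).1, hxab⟩
      rw [Finset.mem_union, Finset.mem_singleton]
      push_neg
      constructor
      · rw [hUqdef, Finset.mem_sdiff, Finset.mem_union]
        push_neg
        intro _
        exact Or.inr hxpts
      · intro h
        exact hptsS x hxpts (h ▸ hs₀)
    have hpd : (Fq : Set (α × α)).PairwiseDisjoint (fun ab => ({ab.1, ab.2} : Finset α)) := by
      intro ab ha cd hc hne
      have ha' : ab ∈ I := (Finset.mem_filter.mp ha).1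
      have hc' : cd ∈ I := (Finset.mem_filter.mp hc).1
      exact Finset.disjoint_iff_inter_eq_empty.mpr (hval.2.2.2.1 ab ha' cd hc' hne)
    rw [hdecomp, Finset.sum_union hd1, Finset.sum_union hd2, Finset.sum_biUnion hpd] at hkey
    have hsum1 : ∑ w ∈ Uq, Phi V k g (insert w S') I = (Uq.card : ℝ) * Phi V k g S I := by
      rw [Finset.sum_congr rfl hUphi, Finset.sum_const, nsmul_eq_mul]
    have hsum2 : ∑ w ∈ ({s₀} : Finset α), Phi V k g (insert w S') I = Phi V k g S I := by
      rw [Finset.sum_singleton, hSins]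
    have hsum3 : ∑ ab ∈ Fq, ∑ w ∈ ({ab.1, ab.2} : Finset α), Phi V k g (insert w S') I = 0 := by
      refine Finset.sum_eq_zero fun ab hab => ?_
      have hab' : ab ∈ I := (Finset.mem_filter.mp hab).1
      rw [Finset.sum_pair (hval.2.2.1 ab hab')]
      rw [phi_pair g S' hab']
      exact hPhiS'
    rw [hsum1, hsum2, hsum3, hPhiS', mul_zero] at hkey
    have hfac : ((Uq.card : ℝ) + 1) * Phi V k g S I = 0 := by linarith
    have hne : ((Uq.card : ℝ) + 1) ≠ 0 := by positivity
    exact (mul_eq_zero.mp hfac).resolve_left hne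

lemma g_zero (hV : ∀ i j, i ≠ j → Disjoint (V i) (V j)) (g : KX V k → ℝ)
    (hg : ∀ I, Valid V k ∅ I → Phi V k g ∅ I = 0) : g = 0 := by
  funext C₀
  have hval : Valid V k C₀.1 ∅ := by
    refine ⟨C₀.2.1, by simp, by simp, by simp, by simp, fun p => ?_⟩
    simp [C₀.2.2 p]
  have h := phi_zero hV g hg C₀.1.card C₀.1 ∅ le_rfl hval
  unfold Phi at h
  have hterm : ∀ C : KX V k, (if C₀.1 ⊆ C.1 then (1:ℝ) else 0) * (pairFun ∅ C.1 * g C)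
      = (if C = C₀ then g C₀ else 0) := by
    intro C
    rw [pairFun, Finset.prod_empty, one_mul]
    by_cases hC : C = C₀
    · subst hC
      rw [if_pos (Finset.Subset.refl _), if_pos rfl, one_mul]
    · rw [if_neg hC]
      have hsub : ¬ C₀.1 ⊆ C.1 := by
        intro hsub
        apply hC
        apply Subtype.ext
        exact (Finset.eq_of_subset_of_card_le hsub
          (by rw [kx_card hV C, kx_card hV C₀])).symm
      rw [if_neg hsub, zero_mul]
  rw [Finset.sum_congr rfl (fun C _ => hterm C), Finset.sum_ite_eq' Finset.univ C₀
    (fun _ => g C₀)] at h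
  simpa using h

end
lemma choose_step (x y : ℕ) (h : y ≤ x) : (x-1).choose (y-1) ≤ x.choose y := by
  rcases Nat.eq_zero_or_pos y with rfl | hy
  · simp
  · have hx : 1 ≤ x := le_trans hy h
    obtain ⟨x', rfl⟩ := Nat.exists_eq_add_of_le hx
    obtain ⟨y', rfl⟩ := Nat.exists_eq_add_of_le hy
    simp only [Nat.add_sub_cancel_left, Nat.add_comm 1, Nat.succ_sub_one]
    rw [Nat.choose_succ_succ]
    exact Nat.le_add_right _ _

lemma choose_sub_le (j a b : ℕ) (h : b ≤ a) : (a-j).choose (b-j) ≤ a.choose b := by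
  induction j with
  | zero => simp
  | succ j IH =>
    have h1 : a - (j+1) = (a - j) - 1 := by omega
    have h2 : b - (j+1) = (b - j) - 1 := by omega
    rw [h1, h2]
    exact le_trans (choose_step _ _ (by omega)) IH

lemma choose_id (a b : ℕ) (ha : 1 ≤ a) (hb : 1 ≤ b) :
    a * (a-1).choose (b-1) = b * a.choose b := by
  have := Nat.add_one_mul_choose_eq (a-1) (b-1)
  have h1 : a - 1 + 1 = a := by omega
  have h2 : b - 1 + 1 = b := by omega
  rw [h1, h2] at this
  rw [this]
  ring
theorem stmt9 {α : Type*} [Fintype α] [DecidableEq α] (ℓ : ℕ) (hl : 0 < ℓ)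
    (n k : Fin ℓ → ℕ) (hk : ∀ i, 0 < k i) (hn : ∀ i, 2 * k i ≤ n i)
    (hsorted : ∀ i j : Fin ℓ, i ≤ j → n i * k j ≤ n j * k i)
    (V : Fin ℓ → Finset α)
    (hV : ∀ i j, i ≠ j → Disjoint (V i) (V j))
    (hVcard : ∀ i, (V i).card = n i) :
    (∀ A : {A : Finset α // A ⊆ Finset.univ.biUnion V ∧ ∀ i, (A ∩ V i).card = k i},
      (Finset.univ.filter
        (fun B : {A : Finset α // A ⊆ Finset.univ.biUnion V ∧ ∀ i, (A ∩ V i).card = k i} =>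
          Disjoint A.1 B.1)).card = ∏ p, (n p - k p).choose (k p)) ∧
    IsGreatest {x : ℝ | ∃ μ : ℝ,
        Module.End.HasEigenvalue
          (Matrix.toLin' (Matrix.of
            (fun A B : {A : Finset α // A ⊆ Finset.univ.biUnion V ∧ ∀ i, (A ∩ V i).card = k i} =>
              if Disjoint A.1 B.1 then (1 : ℝ) else 0))) μ ∧
        μ ≠ ((∏ p, (n p - k p).choose (k p) : ℕ) : ℝ) ∧ x = |μ|}
      ((k ⟨0, hl⟩ : ℝ) / ((n ⟨0, hl⟩ : ℝ) - (k ⟨0, hl⟩ : ℝ)) *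
        ∏ p, ((n p - k p).choose (k p) : ℝ)) := by
  classical
  set q0 : Fin ℓ := ⟨0, hl⟩ with hq0
  set Dn : ℕ := ∏ p, (n p - k p).choose (k p) with hDn
  set lam : ℝ := (k q0 : ℝ) / ((n q0 : ℝ) - (k q0 : ℝ)) * ∏ p, ((n p - k p).choose (k p) : ℝ)
    with hlam
  set Mat : Matrix (KX V k) (KX V k) ℝ := Matrix.of
    (fun A B : KX V k => if Disjoint A.1 B.1 then (1 : ℝ) else 0) with hMat
  set T : Module.End ℝ (KX V k → ℝ) := Matrix.toLin' Mat with hT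
  -- basic numeric facts
  have hkn : ∀ p, k p ≤ n p - k p := fun p => by have := hn p; omega
  have hq0le : ∀ q : Fin ℓ, q0 ≤ q := fun q => Fin.mk_le_of_le_val (Nat.zero_le _)
  have hcastnk : ∀ p, ((n p - k p : ℕ) : ℝ) = (n p : ℝ) - (k p : ℝ) := fun p =>
    Nat.cast_sub (by have := hn p; omega)
  have hnkpos : ∀ p, (0:ℝ) < (n p : ℝ) - (k p : ℝ) := fun p => by
    rw [← hcastnk p]
    exact_mod_cast Nat.pos_of_ne_zero (by have := hn p; have := hk p; omega)
  have hDcast : ((Dn : ℕ) : ℝ) = ∏ p, ((n p - k p).choose (k p) : ℝ) := by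
    rw [hDn]; push_cast; rfl
  -- the eigenvalue of a pair system
  set mI : Finset (α × α) → Fin ℓ → ℕ :=
    fun I p => (I.filter (fun ab => ab.1 ∈ V p)).card with hmI
  set μfun : Finset (α × α) → ℝ := fun I => (-1:ℝ)^I.card *
    ∏ p, ((n p - k p - mI I p).choose (k p - mI I p) : ℝ) with hμfun
  have hmle : ∀ I, Valid V k ∅ I → ∀ p, mI I p ≤ k p := by
    intro I hI p
    have := hI.2.2.2.2.2 p
    simpa using this
  -- eigenvector property
  have heigvec : ∀ I, Valid V k ∅ I →
      T (fun A : KX V k => pairFun I A.1) = μfun I • (fun A : KX V k => pairFun I A.1) := by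
    intro I hI
    funext A
    have h1 : (T (fun A : KX V k => pairFun I A.1)) A
        = ∑ B : KX V k, (if Disjoint A.1 B.1 then (1:ℝ) else 0) * pairFun I B.1 := by
      rw [hT, Matrix.toLin'_apply]
      simp [Matrix.mulVec, dotProduct, hMat]
    rw [h1, eigen_lemma n hV hVcard hI A]
    simp [hμfun, hmI]
  -- the safe set of eigenvalues
  set Sset : Set ℝ := {c | c = (Dn : ℝ) ∨ |c| ≤ lam} with hSset
  have hμmem : ∀ I, Valid V k ∅ I → μfun I ∈ Sset := by
    intro I hI
    rcases Finset.eq_empty_or_nonempty I with rfl | ⟨ab, hab⟩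
    · left
      simp [hμfun, hmI, hDcast]
    · right
      obtain ⟨q, hq1, hq2⟩ := hI.2.1 ab hab
      have hmq : 1 ≤ mI I q := by
        rw [hmI]
        exact Finset.card_pos.mpr ⟨ab, Finset.mem_filter.mpr ⟨hab, hq1⟩⟩
      have hmkq := hmle I hI
      -- nat inequality
      have hnat : (n q - k q) * ∏ p, (n p - k p - mI I p).choose (k p - mI I p)
          ≤ k q * ∏ p, (n p - k p).choose (k p) := by
        rw [← Finset.mul_prod_erase Finset.univ _ (Finset.mem_univ q),
            ← Finset.mul_prod_erase Finset.univ (fun p => (n p - k p).choose (k p))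
              (Finset.mem_univ q), ← mul_assoc, ← mul_assoc]
        have hfq : (n q - k q) * (n q - k q - mI I q).choose (k q - mI I q)
            ≤ k q * (n q - k q).choose (k q) := by
          have e1 : n q - k q - mI I q = (n q - k q - 1) - (mI I q - 1) := by omega
          have e2 : k q - mI I q = (k q - 1) - (mI I q - 1) := by omega
          have h3 : (n q - k q - 1).choose (k q - 1) * (n q - k q)
              = k q * (n q - k q).choose (k q) := by
            rw [mul_comm]
            exact choose_id (n q - k q) (k q) (by have := hn q; have := hk q; omega) (hk q)
          calc (n q - k q) * (n q - k q - mI I q).choose (k q - mI I q)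
              ≤ (n q - k q) * (n q - k q - 1).choose (k q - 1) := by
                apply Nat.mul_le_mul_left
                rw [e1, e2]
                exact choose_sub_le _ _ _ (by have := hn q; have := hk q; omega)
            _ = k q * (n q - k q).choose (k q) := by rw [mul_comm]; exact h3
        exact Nat.mul_le_mul hfq (Finset.prod_le_prod' fun p _ =>
          choose_sub_le _ _ _ (hkn p))
      -- pass to ℝ
      have habs : |μfun I| = ∏ p, ((n p - k p - mI I p).choose (k p - mI I p) : ℝ) := by
        rw [hμfun]
        rw [abs_mul, abs_pow, abs_neg, abs_one, one_pow, one_mul]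
        exact abs_of_nonneg (Finset.prod_nonneg fun p _ => Nat.cast_nonneg _)
      rw [habs]
      have hnatR : ((n q : ℝ) - k q) * ∏ p, ((n p - k p - mI I p).choose (k p - mI I p) : ℝ)
          ≤ (k q : ℝ) * (Dn : ℝ) := by
        have h' : (((n q - k q) * ∏ p, (n p - k p - mI I p).choose (k p - mI I p) : ℕ) : ℝ)
            ≤ ((k q * ∏ p, (n p - k p).choose (k p) : ℕ) : ℝ) := Nat.cast_le.mpr hnat
        push_cast at h'
        rw [hcastnk q] at h'
        rw [hDcast]
        push_cast
        exact h'
      have hstep1 : ∏ p, ((n p - k p - mI I p).choose (k p - mI I p) : ℝ)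
          ≤ (k q : ℝ) / ((n q : ℝ) - k q) * (Dn : ℝ) := by
        rw [div_mul_eq_mul_div, le_div_iff₀ (hnkpos q)]
        calc (∏ p, ((n p - k p - mI I p).choose (k p - mI I p) : ℝ)) * ((n q:ℝ) - k q)
            = ((n q : ℝ) - k q) * ∏ p, ((n p - k p - mI I p).choose (k p - mI I p) : ℝ) := by
              ring
          _ ≤ (k q : ℝ) * (Dn : ℝ) := hnatR
      refine le_trans hstep1 ?_
      rw [hlam, ← hDcast]
      apply mul_le_mul_of_nonneg_right _ (Nat.cast_nonneg _)
      rw [div_le_div_iff₀ (hnkpos q) (hnkpos q0)]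
      have hs := hsorted q0 q (hq0le q)
      have hsR : (n q0 : ℝ) * (k q : ℝ) ≤ (n q : ℝ) * (k q0 : ℝ) := by exact_mod_cast hs
      have hb1 : (0:ℝ) ≤ (k q : ℝ) := Nat.cast_nonneg _
      have hb2 : (0:ℝ) ≤ (k q0 : ℝ) := Nat.cast_nonneg _
      nlinarith [hsR, hb1, hb2]
  -- span of eigenvectors is everything
  have hsup : (⨆ c ∈ Sset, Module.End.eigenspace T c) = ⊤ := by
    by_contra hne
    obtain ⟨φ, hφne, hφmap⟩ :=
      Submodule.exists_dual_map_eq_bot_of_lt_top (Ne.lt_top hne) inferInstance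
    set g : KX V k → ℝ := fun C => φ (fun j => if C = j then (1:ℝ) else 0) with hg
    have hφv : ∀ v : KX V k → ℝ, φ v = ∑ C : KX V k, v C * g C := by
      intro v
      conv_lhs => rw [pi_eq_sum_univ v, map_sum]
      exact Finset.sum_congr rfl fun C _ => by rw [map_smul, smul_eq_mul]
    have hgI : ∀ I, Valid V k ∅ I → Phi V k g ∅ I = 0 := by
      intro I hI
      have hmem : (fun A : KX V k => pairFun I A.1) ∈ ⨆ c ∈ Sset, Module.End.eigenspace T c :=
        (le_biSup (f := fun c => Module.End.eigenspace T c) (hμmem I hI))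
          (Module.End.mem_eigenspace_iff.mpr (heigvec I hI))
      have hzero : φ (fun A : KX V k => pairFun I A.1) = 0 := by
        have : φ (fun A : KX V k => pairFun I A.1) ∈
            Submodule.map φ (⨆ c ∈ Sset, Module.End.eigenspace T c) :=
          Submodule.mem_map_of_mem hmem
        rw [hφmap] at this
        simpa using this
      rw [hφv] at hzero
      unfold Phi
      rw [← hzero]
      exact Finset.sum_congr rfl fun C _ => by
        rw [if_pos (Finset.empty_subset _), one_mul]
    have hg0 : g = 0 := g_zero hV g hgI
    apply hφne
    apply LinearMap.ext
    intro v
    rw [hφv, hg0]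
    simp
  constructor
  · -- regularity
    intro A
    have h := master_count n k V hV hVcard A ∅ (Finset.empty_subset _)
      (fun _ => 0) (by simp) (fun p => Nat.zero_le _) (Finset.disjoint_left.mpr (by simp))
    simp only [Nat.sub_zero] at h
    rw [hDn, ← h]
    congr 1
    apply Finset.filter_congr
    intro B _
    simp
  · constructor
    · -- membership : lam is attained
      obtain ⟨x, hx, y, hy, hxy⟩ := Finset.one_lt_card.mp (by
        rw [hVcard q0]
        have := hn q0; have := hk q0
        omega)
      set I₀ : Finset (α × α) := {(x, y)} with hI₀
      have hxVp : ∀ p, p ≠ q0 → x ∉ V p := fun p hp h =>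
        Finset.disjoint_left.mp (hV p q0 hp) h hx
      have hyVp : ∀ p, p ≠ q0 → y ∉ V p := fun p hp h =>
        Finset.disjoint_left.mp (hV p q0 hp) h hy
      have hval₀ : Valid V k ∅ I₀ := by
        refine ⟨Finset.empty_subset _, ?_, ?_, ?_, ?_, ?_⟩
        · intro ab hab
          rw [hI₀, Finset.mem_singleton] at hab
          subst hab
          exact ⟨q0, hx, hy⟩
        · intro ab hab
          rw [hI₀, Finset.mem_singleton] at hab
          subst hab
          exact hxy
        · intro ab hab cd hcd hne
          rw [hI₀, Finset.mem_singleton] at hab hcd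
          exact absurd (hab.trans hcd.symm) hne
        · intro ab hab
          simp
        · intro p
          rw [hI₀]
          rcases eq_or_ne p q0 with hpq | hp
          · have hxp : x ∈ V p := by rw [hpq]; exact hx
            have h1 : ({(x,y)} : Finset (α × α)).filter (fun ab => ab.1 ∈ V p) = {(x,y)} := by
              rw [Finset.filter_singleton, if_pos hxp]
            rw [h1]
            have := hk p
            simp; omega
          · have h1 : ({(x,y)} : Finset (α × α)).filter (fun ab => ab.1 ∈ V p) = ∅ := by
              rw [Finset.filter_singleton, if_neg (hxVp p hp)]
            rw [h1]
            simp
      have hmI₀ : ∀ p, mI I₀ p = if p = q0 then 1 else 0 := by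
        intro p
        simp only [hmI, hI₀]
        rcases eq_or_ne p q0 with hpq | hp
        · have hxp : x ∈ V p := by rw [hpq]; exact hx
          rw [Finset.filter_singleton, if_pos hxp, if_pos hpq]
          simp
        · rw [Finset.filter_singleton, if_neg (hxVp p hp), if_neg hp]
          simp
      -- the value
      have hPnat : ∀ p, (n p - k p - mI I₀ p).choose (k p - mI I₀ p)
          = if p = q0 then (n q0 - k q0 - 1).choose (k q0 - 1) else (n p - k p).choose (k p) := by
        intro p
        rw [hmI₀ p]
        rcases eq_or_ne p q0 with hpq | hp
        · rw [if_pos hpq, if_pos hpq, hpq]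
        · rw [if_neg hp, if_neg hp]
          simp
      have hprodval : (n q0 - k q0) * ∏ p, (n p - k p - mI I₀ p).choose (k p - mI I₀ p)
          = k q0 * Dn := by
        rw [Finset.prod_congr rfl (fun p _ => hPnat p)]
        rw [hDn, ← Finset.mul_prod_erase Finset.univ _ (Finset.mem_univ q0),
            ← Finset.mul_prod_erase Finset.univ (fun p => (n p - k p).choose (k p))
              (Finset.mem_univ q0)]
        rw [if_pos rfl, ← mul_assoc, ← mul_assoc]
        have h3 : (n q0 - k q0) * (n q0 - k q0 - 1).choose (k q0 - 1)
            = k q0 * (n q0 - k q0).choose (k q0) :=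
          choose_id (n q0 - k q0) (k q0) (by have := hn q0; have := hk q0; omega) (hk q0)
        rw [h3]
        congr 1
        apply Finset.prod_congr rfl
        intro p hp
        rw [if_neg (Finset.mem_erase.mp hp).1]
      have hPpos : 0 < ∏ p, (n p - k p - mI I₀ p).choose (k p - mI I₀ p) := by
        apply Finset.prod_pos
        intro p _
        apply Nat.choose_pos
        have h1 := hmle I₀ hval₀ p
        have := hn p; have := hk p
        omega
      have hμ₀ : μfun I₀ = -(∏ p, ((n p - k p - mI I₀ p).choose (k p - mI I₀ p) : ℝ)) := by
        rw [hμfun, hI₀]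
        simp
      have hlamval : lam = ∏ p, ((n p - k p - mI I₀ p).choose (k p - mI I₀ p) : ℝ) := by
        have hR : ((n q0 : ℝ) - k q0) * ∏ p, ((n p - k p - mI I₀ p).choose (k p - mI I₀ p) : ℝ)
            = (k q0 : ℝ) * (Dn : ℝ) := by
          rw [← hcastnk q0]
          push_cast
          exact_mod_cast congrArg (Nat.cast : ℕ → ℝ) hprodval
        have hne0 : ((n q0:ℝ) - k q0) ≠ 0 := ne_of_gt (hnkpos q0)
        rw [hlam, ← hDcast, div_mul_eq_mul_div, eq_comm, eq_div_iff hne0]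
        linarith [hR]
      -- the eigenvector is nonzero
      have hex : ∀ p, ∃ t, t ⊆ V p ∧ t.card = k p ∧ (p = q0 → (x ∈ t ∧ y ∉ t)) := by
        intro p
        rcases eq_or_ne p q0 with hpq | hp
        · have hx' : x ∈ V p := by rw [hpq]; exact hx
          have hy' : y ∈ V p := by rw [hpq]; exact hy
          obtain ⟨t', ht's, ht'c⟩ := Finset.exists_subset_card_eq (s := V p \ {x, y}) (n := k p - 1)
            (by
              rw [Finset.card_sdiff_of_subset (by
                intro z hz
                simp only [Finset.mem_insert, Finset.mem_singleton] at hz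
                rcases hz with rfl | rfl
                exacts [hx', hy'])]
              rw [hVcard p]
              have hcard2 : ({x, y} : Finset α).card = 2 := Finset.card_pair hxy
              rw [hcard2]
              have := hn p; have := hk p
              omega)
          refine ⟨insert x t', ?_, ?_, fun _ => ⟨Finset.mem_insert_self _ _, ?_⟩⟩
          · apply Finset.insert_subset hx'
            exact ht's.trans (Finset.sdiff_subset)
          · rw [Finset.card_insert_of_notMem (fun hxt => by
              have := ht's hxt
              simp at this)]
            rw [ht'c]
            have := hk p
            omega
          · intro hyt
            rcases Finset.mem_insert.mp hyt with h | h
            · exact hxy h.symm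
            · have := ht's h
              simp at this
        · obtain ⟨t, hts, htc⟩ := Finset.exists_subset_card_eq (s := V p) (n := k p)
            (by rw [hVcard p]; have := hn p; omega)
          exact ⟨t, hts, htc, fun h => absurd h hp⟩
      choose σ hσ1 hσ2 hσ3 using hex
      set A₀ : Finset α := Finset.univ.biUnion σ with hA₀
      have hA₀V : ∀ p, A₀ ∩ V p = σ p := by
        intro p
        ext z
        simp only [hA₀, Finset.mem_inter, Finset.mem_biUnion]
        constructor
        · rintro ⟨⟨q, _, hq⟩, hzp⟩
          rcases eq_or_ne q p with rfl | hne
          · exact hq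
          · exact absurd hzp (Finset.disjoint_left.mp (hV q p hne) (hσ1 q hq))
        · intro hz
          exact ⟨⟨p, Finset.mem_univ p, hz⟩, hσ1 p hz⟩
      have hA₀mem : A₀ ⊆ Finset.univ.biUnion V ∧ ∀ i, (A₀ ∩ V i).card = k i := by
        constructor
        · intro z hz
          obtain ⟨p, _, hp⟩ := Finset.mem_biUnion.mp hz
          exact Finset.mem_biUnion.mpr ⟨p, Finset.mem_univ p, hσ1 p hp⟩
        · intro i
          rw [hA₀V i, hσ2 i]
      set A₀x : KX V k := ⟨A₀, hA₀mem⟩ with hA₀x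
      have hfA₀ : pairFun I₀ A₀ = 1 := by
        rw [pairFun, hI₀, Finset.prod_singleton]
        have hxA : x ∈ A₀ := by
          rw [hA₀]
          exact Finset.mem_biUnion.mpr ⟨q0, Finset.mem_univ q0, (hσ3 q0 rfl).1⟩
        have hyA : y ∉ A₀ := by
          rw [hA₀]
          intro hy'
          obtain ⟨p, _, hp⟩ := Finset.mem_biUnion.mp hy'
          rcases eq_or_ne p q0 with hpq | hne
          · exact (hσ3 p hpq).2 hp
          · exact hyVp p hne (hσ1 p hp)
        simp [hxA, hyA]
      have hfne : (fun A : KX V k => pairFun I₀ A.1) ≠ 0 := by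
        intro h
        have := congrFun h A₀x
        rw [hfA₀] at this
        simp at this
      have hasE : Module.End.HasEigenvalue T (μfun I₀) :=
        Module.End.hasEigenvalue_of_hasEigenvector
          ⟨Module.End.mem_eigenspace_iff.mpr (heigvec I₀ hval₀), hfne⟩
      have hPposR : (0:ℝ) < ∏ p, ((n p - k p - mI I₀ p).choose (k p - mI I₀ p) : ℝ) := by
        rw [← Nat.cast_prod]
        exact_mod_cast hPpos
      refine ⟨μfun I₀, hasE, ?_, ?_⟩
      · rw [hμ₀]
        intro hcontra
        have : (0:ℝ) ≤ (Dn : ℝ) := Nat.cast_nonneg _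
        linarith
      · rw [hμ₀, abs_neg, abs_of_pos hPposR, hlamval]
    · -- upper bound
      rintro xval ⟨μ, hμE, hμne, rfl⟩
      have hμS : μ ∈ Sset := by
        by_contra hc
        have hd := Module.End.eigenspaces_iSupIndep T μ
        have hle : Module.End.eigenspace T μ ≤ ⨆ ν, ⨆ _ : ν ≠ μ, Module.End.eigenspace T ν := by
          calc Module.End.eigenspace T μ ≤ ⊤ := le_top
            _ = ⨆ c ∈ Sset, Module.End.eigenspace T c := hsup.symm
            _ ≤ ⨆ ν, ⨆ _ : ν ≠ μ, Module.End.eigenspace T ν := by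
                refine iSup₂_le fun c hcS => ?_
                exact le_iSup₂ (f := fun ν (_ : ν ≠ μ) => Module.End.eigenspace T ν) c
                  (fun h => hc (h ▸ hcS))
        exact hμE (hd.eq_bot_of_le hle)
      rcases hμS with h | h
      · exact absurd h hμne
      · exact le_trans h (le_of_eq rfl)
end

section
/- Let $\mathcal{F}_1, \dots, \mathcal{F}_s \subseteq \binom{[n]}{k}$ be rainbow matching free and let $1 \leq i < j \leq n$. Then the shifted families $S_{ij}(\mathcal{F}_1), \dots, S_{ij}(\mathcal{F}_s)$ are still rainbow matching free. -/
/-- The image of a set under the `(i,j)`-shift with respect to the family `𝓕`. -/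
def shiftSet {α : Type*} [DecidableEq α] (𝓕 : Finset (Finset α)) (i j : α)
    (F : Finset α) : Finset α :=
  if j ∈ F ∧ i ∉ F ∧ insert i (F.erase j) ∉ 𝓕 then insert i (F.erase j) else F

/-- The `(i,j)`-shift of a family of sets. -/
def shiftFam {α : Type*} [DecidableEq α] (i j : α) (𝓕 : Finset (Finset α)) :
    Finset (Finset α) :=
  𝓕.image (shiftSet 𝓕 i j)

theorem stmt11 (n k s : ℕ) (F : Fin s → Finset (Finset (Fin n)))
    (hF : ∀ t, ∀ A ∈ F t, A.card = k)
    (i j : Fin n) (hij : i < j)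
    (hrainbow : ¬ ∃ e : Fin s → Finset (Fin n), (∀ t, e t ∈ F t) ∧
      ∀ t t', t ≠ t' → Disjoint (e t) (e t')) :
    ¬ ∃ e : Fin s → Finset (Fin n), (∀ t, e t ∈ shiftFam i j (F t)) ∧
      ∀ t t', t ≠ t' → Disjoint (e t) (e t') := by
  rintro ⟨e, he, hdisj⟩
  have hne : i ≠ j := hij.ne
  apply hrainbow
  have key : ∀ t, e t ∈ F t ∨
      (i ∈ e t ∧ j ∉ e t ∧ e t ∉ F t ∧ insert j ((e t).erase i) ∈ F t) := by
    intro t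
    obtain ⟨A, hA, hAe⟩ := Finset.mem_image.mp (he t)
    unfold shiftSet at hAe
    split_ifs at hAe with h
    · right
      obtain ⟨hjA, hiA, hnot⟩ := h
      rw [← hAe]
      refine ⟨Finset.mem_insert_self _ _, ?_, hnot, ?_⟩
      · intro hj
        rcases Finset.mem_insert.mp hj with h' | h'
        · exact hne h'.symm
        · exact (Finset.mem_erase.mp h').1 rfl
      · have h1 : (insert i (A.erase j)).erase i = A.erase j := by
          rw [Finset.erase_insert]
          simp [hiA]
        rw [h1, Finset.insert_erase hjA]
        exact hA
    · rw [← hAe]; exact Or.inl hA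
  have hd : ∀ a b (x : Fin n), a ≠ b → x ∈ e a → x ∉ e b := fun a b x hab ha =>
    Finset.disjoint_left.mp (hdisj a b hab) ha
  by_cases h0 : ∃ t₀, e t₀ ∉ F t₀
  · obtain ⟨t₀, ht₀⟩ := h0
    obtain h | ⟨hi0, hj0, _, hB0⟩ := key t₀
    · exact absurd h ht₀
    have hmem : ∀ t, t ≠ t₀ → e t ∈ F t := by
      intro t ht
      obtain h | ⟨hi, _⟩ := key t
      · exact h
      · exact absurd hi0 (hd t t₀ i ht hi)
    by_cases h1 : ∃ t₁, t₁ ≠ t₀ ∧ j ∈ e t₁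
    · obtain ⟨t₁, ht₁, hj1⟩ := h1
      have hi1 : i ∉ e t₁ := fun hi => hd t₁ t₀ i ht₁ hi hi0
      have hB1 : insert i ((e t₁).erase j) ∈ F t₁ := by
        obtain ⟨A, hA, hAe⟩ := Finset.mem_image.mp (he t₁)
        unfold shiftSet at hAe
        split_ifs at hAe with h
        · exfalso
          rw [← hAe] at hj1
          rcases Finset.mem_insert.mp hj1 with h' | h'
          · exact hne h'.symm
          · exact (Finset.mem_erase.mp h').1 rfl
        · subst hAe
          push_neg at h
          exact h hj1 hi1
      have hjother : ∀ t, t ≠ t₁ → j ∉ e t := fun t ht hj => hd t t₁ j ht hj hj1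
      have hiother : ∀ t, t ≠ t₀ → i ∉ e t := fun t ht hi => hd t t₀ i ht hi hi0
      refine ⟨fun t => if t = t₀ then insert j ((e t₀).erase i)
        else if t = t₁ then insert i ((e t₁).erase j) else e t, ?_, ?_⟩
      · intro t
        dsimp only
        by_cases h' : t = t₀
        · rw [h', if_pos rfl]; exact hB0
        · by_cases h'' : t = t₁
          · rw [h'', if_neg (h'' ▸ h' : t₁ ≠ t₀), if_pos rfl]; exact hB1
          · rw [if_neg h', if_neg h'']; exact hmem t h'
      · intro t t' htt'
        rw [Finset.disjoint_left]
        intro x hx hx'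
        dsimp only at hx hx'
        by_cases h1 : t = t₀
        · rw [if_pos h1] at hx
          have h2 : t' ≠ t₀ := fun hh => htt' (h1.trans hh.symm)
          rw [if_neg h2] at hx'
          simp only [Finset.mem_insert, Finset.mem_erase] at hx
          by_cases h4 : t' = t₁
          · rw [if_pos h4] at hx'
            simp only [Finset.mem_insert, Finset.mem_erase] at hx'
            rcases hx with rfl | ⟨hxi, hx⟩
            · rcases hx' with rfl | ⟨hxj, _⟩
              · exact hne rfl
              · exact hxj rfl
            · rcases hx' with rfl | ⟨_, hx'⟩
              · exact hxi rfl
              · rw [← h1] at hx; rw [← h4] at hx'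
                exact hd t t' x htt' hx hx'
          · rw [if_neg h4] at hx'
            rcases hx with rfl | ⟨_, hx⟩
            · exact hjother t' h4 hx'
            · rw [← h1] at hx
              exact hd t t' x htt' hx hx'
        · rw [if_neg h1] at hx
          by_cases h3 : t = t₁
          · rw [if_pos h3] at hx
            simp only [Finset.mem_insert, Finset.mem_erase] at hx
            by_cases h2 : t' = t₀
            · rw [if_pos h2] at hx'
              simp only [Finset.mem_insert, Finset.mem_erase] at hx'
              rcases hx with rfl | ⟨hxj, hx⟩
              · rcases hx' with rfl | ⟨hxi, _⟩
                · exact hne rfl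
                · exact hxi rfl
              · rcases hx' with rfl | ⟨_, hx'⟩
                · exact hxj rfl
                · rw [← h3] at hx; rw [← h2] at hx'
                  exact hd t t' x htt' hx hx'
            · have h4 : t' ≠ t₁ := fun hh => htt' (h3.trans hh.symm)
              rw [if_neg h2, if_neg h4] at hx'
              rcases hx with rfl | ⟨_, hx⟩
              · exact hiother t' h2 hx'
              · rw [← h3] at hx
                exact hd t t' x htt' hx hx'
          · rw [if_neg h3] at hx
            by_cases h2 : t' = t₀
            · rw [if_pos h2] at hx'
              simp only [Finset.mem_insert, Finset.mem_erase] at hx'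
              rcases hx' with rfl | ⟨_, hx'⟩
              · exact hjother t h3 hx
              · rw [← h2] at hx'
                exact hd t t' x htt' hx hx'
            · rw [if_neg h2] at hx'
              by_cases h4 : t' = t₁
              · rw [if_pos h4] at hx'
                simp only [Finset.mem_insert, Finset.mem_erase] at hx'
                rcases hx' with rfl | ⟨_, hx'⟩
                · exact hiother t h1 hx
                · rw [← h4] at hx'
                  exact hd t t' x htt' hx hx'
              · rw [if_neg h4] at hx'
                exact hd t t' x htt' hx hx'
    · push_neg at h1
      have hjall : ∀ t, j ∉ e t := by
        intro t
        by_cases ht : t = t₀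
        · subst ht; exact hj0
        · exact h1 t ht
      refine ⟨fun t => if t = t₀ then insert j ((e t₀).erase i) else e t, ?_, ?_⟩
      · intro t
        dsimp only
        by_cases h' : t = t₀
        · rw [h', if_pos rfl]; exact hB0
        · rw [if_neg h']; exact hmem t h'
      · intro t t' htt'
        rw [Finset.disjoint_left]
        intro x hx hx'
        dsimp only at hx hx'
        by_cases h1 : t = t₀
        · rw [if_pos h1] at hx
          have h2 : t' ≠ t₀ := fun hh => htt' (h1.trans hh.symm)
          rw [if_neg h2] at hx'
          simp only [Finset.mem_insert, Finset.mem_erase] at hx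
          rcases hx with rfl | ⟨_, hx⟩
          · exact hjall t' hx'
          · rw [← h1] at hx
            exact hd t t' x htt' hx hx'
        · rw [if_neg h1] at hx
          by_cases h2 : t' = t₀
          · rw [if_pos h2] at hx'
            simp only [Finset.mem_insert, Finset.mem_erase] at hx'
            rcases hx' with rfl | ⟨_, hx'⟩
            · exact hjall t hx
            · rw [← h2] at hx'
              exact hd t t' x htt' hx hx'
          · rw [if_neg h2] at hx'
            exact hd t t' x htt' hx hx'
  · push_neg at h0
    exact ⟨e, h0, hdisj⟩
end

section
/- Let $\mathcal{F} \subseteq \binom{[n]}{k}$ and let $1 \leq i < j \leq n$. Then the shift $S_{ij}$ does not increase the matching number: $\nu(S_{ij}(\mathcal{F})) \leq \nu(\mathcal{F})$. -/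
/-- The matching number of a family: the largest size of a subfamily of pairwise
disjoint members. -/
noncomputable def matchingNumber {α : Type*} (𝓕 : Finset (Finset α)) : ℕ :=
  sSup {m | ∃ M : Finset (Finset α), M ⊆ 𝓕 ∧
    (↑M : Set (Finset α)).Pairwise Disjoint ∧ M.card = m}

lemma mem_shiftFam_cases {α : Type*} [DecidableEq α] (𝓕 : Finset (Finset α))
    {i j : α} (hne : i ≠ j) {G : Finset α} (h : G ∈ shiftFam i j 𝓕) :
    G ∈ 𝓕 ∨ (i ∈ G ∧ j ∉ G ∧ G ∉ 𝓕 ∧ insert j (G.erase i) ∈ 𝓕) := by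
  rw [shiftFam, Finset.mem_image] at h
  obtain ⟨F, hF, hFG⟩ := h
  unfold shiftSet at hFG
  split_ifs at hFG with hc
  · obtain ⟨hjF, hiF, hnF⟩ := hc
    refine Or.inr ⟨?_, ?_, ?_, ?_⟩
    · rw [← hFG]; exact Finset.mem_insert_self _ _
    · rw [← hFG]
      simp [Finset.mem_insert, Finset.mem_erase, hne.symm]
    · rw [← hFG]; exact hnF
    · have h1 : G.erase i = F.erase j := by
        rw [← hFG]
        apply Finset.erase_insert
        simp [Finset.mem_erase, hiF]
      rw [h1, Finset.insert_erase hjF]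
      exact hF
  · exact Or.inl (hFG ▸ hF)

lemma mem_shiftFam_mem {α : Type*} [DecidableEq α] (𝓕 : Finset (Finset α))
    {i j : α} {G : Finset α} (h : G ∈ shiftFam i j 𝓕)
    (hjG : j ∈ G) (hiG : i ∉ G) :
    G ∈ 𝓕 ∧ insert i (G.erase j) ∈ 𝓕 := by
  rw [shiftFam, Finset.mem_image] at h
  obtain ⟨F, hF, hFG⟩ := h
  unfold shiftSet at hFG
  split_ifs at hFG with hc
  · exfalso; apply hiG; rw [← hFG]; exact Finset.mem_insert_self _ _
  · push_neg at hc
    subst hFG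
    exact ⟨hF, hc hjG hiG⟩

lemma exists_matching {α : Type*} [DecidableEq α] (𝓕 : Finset (Finset α))
    {i j : α} (hne : i ≠ j) (M : Finset (Finset α))
    (hMsub : M ⊆ shiftFam i j 𝓕) (hMd : (↑M : Set (Finset α)).Pairwise Disjoint) :
    ∃ M' : Finset (Finset α), M' ⊆ 𝓕 ∧ (↑M' : Set (Finset α)).Pairwise Disjoint ∧
      M'.card = M.card := by
  classical
  have hsym : Symmetric (Disjoint : Finset α → Finset α → Prop) :=
    fun _ _ h => h.symm
  by_cases hall : ∀ G ∈ M, G ∈ 𝓕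
  · exact ⟨M, hall, hMd, rfl⟩
  push_neg at hall
  obtain ⟨G, hGM, hGF⟩ := hall
  rcases mem_shiftFam_cases 𝓕 hne (hMsub hGM) with h | ⟨hiG, hjG, _, hFmem⟩
  · exact absurd h hGF
  set F := insert j (G.erase i) with hFdef
  have hjF : j ∈ F := Finset.mem_insert_self _ _
  have hFsub : ∀ x ∈ F, x = j ∨ (x ∈ G ∧ x ≠ i) := by
    intro x hx
    rcases Finset.mem_insert.mp hx with h | h
    · exact Or.inl h
    · exact Or.inr ⟨Finset.mem_of_mem_erase h, Finset.ne_of_mem_erase h⟩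
  -- every other member of M is in 𝓕 and avoids i
  have hother : ∀ G'' ∈ M, G'' ≠ G → G'' ∈ 𝓕 ∧ i ∉ G'' := by
    intro G'' hG''M hG''ne
    have hd : Disjoint G'' G :=
      hMd (Finset.mem_coe.mpr hG''M) (Finset.mem_coe.mpr hGM) hG''ne
    have hiG'' : i ∉ G'' := fun hx => (Finset.disjoint_left.mp hd hx) hiG
    rcases mem_shiftFam_cases 𝓕 hne (hMsub hG''M) with h | ⟨h, _⟩
    · exact ⟨h, hiG''⟩
    · exact absurd h hiG''
  by_cases hj : ∃ G' ∈ M, G' ≠ G ∧ j ∈ G'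
  · obtain ⟨G', hG'M, hG'ne, hjG'⟩ := hj
    obtain ⟨hG'F, hiG'⟩ := hother G' hG'M hG'ne
    obtain ⟨_, hHmem⟩ := mem_shiftFam_mem 𝓕 (hMsub hG'M) hjG' hiG'
    set H := insert i (G'.erase j) with hHdef
    have hiH : i ∈ H := Finset.mem_insert_self _ _
    have hjH : j ∉ H := by
      simp [hHdef, Finset.mem_insert, Finset.mem_erase, hne.symm]
    have hHsub : ∀ x ∈ H, x = i ∨ (x ∈ G' ∧ x ≠ j) := by
      intro x hx
      rcases Finset.mem_insert.mp hx with h | h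
      · exact Or.inl h
      · exact Or.inr ⟨Finset.mem_of_mem_erase h, Finset.ne_of_mem_erase h⟩
    set R := (M.erase G).erase G' with hRdef
    have hRmem : ∀ X ∈ R, X ∈ M ∧ X ≠ G ∧ X ≠ G' := by
      intro X hX
      have h1 := Finset.mem_of_mem_erase hX
      exact ⟨Finset.mem_of_mem_erase h1, Finset.ne_of_mem_erase h1,
        Finset.ne_of_mem_erase hX⟩
    have hRj : ∀ X ∈ R, j ∉ X := by
      intro X hX hjX
      obtain ⟨hXM, _, hXG'⟩ := hRmem X hX
      have hd : Disjoint X G' :=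
        hMd (Finset.mem_coe.mpr hXM) (Finset.mem_coe.mpr hG'M) hXG'
      exact (Finset.disjoint_left.mp hd hjX) hjG'
    have hRi : ∀ X ∈ R, i ∉ X := fun X hX =>
      (hother X (hRmem X hX).1 (hRmem X hX).2.1).2
    have hRG : ∀ X ∈ R, Disjoint G X := by
      intro X hX
      exact hMd (Finset.mem_coe.mpr hGM) (Finset.mem_coe.mpr (hRmem X hX).1)
        (fun h => (hRmem X hX).2.1 h.symm)
    have hRG' : ∀ X ∈ R, Disjoint G' X := by
      intro X hX
      exact hMd (Finset.mem_coe.mpr hG'M) (Finset.mem_coe.mpr (hRmem X hX).1)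
        (fun h => (hRmem X hX).2.2 h.symm)
    have hGG' : Disjoint G G' :=
      hMd (Finset.mem_coe.mpr hGM) (Finset.mem_coe.mpr hG'M) (fun h => hG'ne h.symm)
    -- disjointness facts
    have hFH : Disjoint F H := by
      rw [Finset.disjoint_left]
      intro x hxF hxH
      rcases hFsub x hxF with rfl | ⟨hxG, hxi⟩
      · exact hjH hxH
      · rcases hHsub x hxH with rfl | ⟨hxG', _⟩
        · exact hxi rfl
        · exact (Finset.disjoint_left.mp hGG' hxG) hxG'
    have hFR : ∀ X ∈ R, Disjoint F X := by
      intro X hX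
      rw [Finset.disjoint_left]
      intro x hxF hxX
      rcases hFsub x hxF with rfl | ⟨hxG, _⟩
      · exact hRj X hX hxX
      · exact (Finset.disjoint_left.mp (hRG X hX) hxG) hxX
    have hHR : ∀ X ∈ R, Disjoint H X := by
      intro X hX
      rw [Finset.disjoint_left]
      intro x hxH hxX
      rcases hHsub x hxH with rfl | ⟨hxG', _⟩
      · exact hRi X hX hxX
      · exact (Finset.disjoint_left.mp (hRG' X hX) hxG') hxX
    have hFnotH : F ≠ H := fun h => hjH (h ▸ hjF)
    have hFnotR : F ∉ R := fun h => hRj F h hjF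
    have hHnotR : H ∉ R := fun h => hRi H h hiH
    refine ⟨insert F (insert H R), ?_, ?_, ?_⟩
    · intro X hX
      rcases Finset.mem_insert.mp hX with rfl | hX
      · exact hFmem
      rcases Finset.mem_insert.mp hX with rfl | hX
      · exact hHmem
      · exact (hother X (hRmem X hX).1 (hRmem X hX).2.1).1
    · rw [Finset.coe_insert, Set.pairwise_insert_of_symmetric]
      constructor
      · rw [Finset.coe_insert, Set.pairwise_insert_of_symmetric]
        refine ⟨hMd.mono ?_, ?_⟩
        · intro X hX
          exact Finset.mem_coe.mpr (hRmem X (Finset.mem_coe.mp hX)).1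
        · intro X hX _
          exact hHR X (Finset.mem_coe.mp hX)
      · intro X hX _
        rcases Finset.mem_insert.mp (Finset.mem_coe.mp hX) with rfl | hX'
        · exact hFH
        · exact hFR X hX'
    · have hG'eM : G' ∈ M.erase G := Finset.mem_erase.mpr ⟨hG'ne, hG'M⟩
      have h1 : R.card = (M.erase G).card - 1 := Finset.card_erase_of_mem hG'eM
      have h2 : (M.erase G).card = M.card - 1 := Finset.card_erase_of_mem hGM
      have h3 : 0 < (M.erase G).card := Finset.card_pos.mpr ⟨G', hG'eM⟩
      have h4 : 0 < M.card := Finset.card_pos.mpr ⟨G, hGM⟩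
      have h5 : F ∉ insert H R := by
        intro h
        rcases Finset.mem_insert.mp h with h | h
        · exact hFnotH h
        · exact hFnotR h
      rw [Finset.card_insert_of_notMem h5, Finset.card_insert_of_notMem hHnotR]
      omega
  · push_neg at hj
    set R := M.erase G with hRdef
    have hRmem : ∀ X ∈ R, X ∈ M ∧ X ≠ G :=
      fun X hX => ⟨Finset.mem_of_mem_erase hX, Finset.ne_of_mem_erase hX⟩
    have hRj : ∀ X ∈ R, j ∉ X :=
      fun X hX => hj X (hRmem X hX).1 (hRmem X hX).2
    have hRG : ∀ X ∈ R, Disjoint G X := by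
      intro X hX
      exact hMd (Finset.mem_coe.mpr hGM) (Finset.mem_coe.mpr (hRmem X hX).1)
        (fun h => (hRmem X hX).2 h.symm)
    have hFR : ∀ X ∈ R, Disjoint F X := by
      intro X hX
      rw [Finset.disjoint_left]
      intro x hxF hxX
      rcases hFsub x hxF with rfl | ⟨hxG, _⟩
      · exact hRj X hX hxX
      · exact (Finset.disjoint_left.mp (hRG X hX) hxG) hxX
    have hFnotR : F ∉ R := fun h => hRj F h hjF
    refine ⟨insert F R, ?_, ?_, ?_⟩
    · intro X hX
      rcases Finset.mem_insert.mp hX with rfl | hX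
      · exact hFmem
      · exact (hother X (hRmem X hX).1 (hRmem X hX).2).1
    · rw [Finset.coe_insert, Set.pairwise_insert_of_symmetric]
      refine ⟨hMd.mono ?_, ?_⟩
      · intro X hX
        exact Finset.mem_coe.mpr (hRmem X (Finset.mem_coe.mp hX)).1
      · intro X hX _
        exact hFR X (Finset.mem_coe.mp hX)
    · have h2 : R.card = M.card - 1 := Finset.card_erase_of_mem hGM
      have h4 : 0 < M.card := Finset.card_pos.mpr ⟨G, hGM⟩
      rw [Finset.card_insert_of_notMem hFnotR]
      omega

theorem stmt12 (n k : ℕ) (𝓕 : Finset (Finset (Fin n)))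
    (h𝓕 : ∀ A ∈ 𝓕, A.card = k) (i j : Fin n) (hij : i < j) :
    matchingNumber (shiftFam i j 𝓕) ≤ matchingNumber 𝓕 := by
  have hne : i ≠ j := ne_of_lt hij
  unfold matchingNumber
  apply csSup_le_csSup
  · refine ⟨𝓕.card, ?_⟩
    rintro m ⟨M, hM, _, hc⟩
    exact hc ▸ Finset.card_le_card hM
  · exact ⟨0, ∅, Finset.empty_subset _, by simp, rfl⟩
  · rintro m ⟨M, hM, hd, hc⟩
    obtain ⟨M', h1, h2, h3⟩ := exists_matching 𝓕 hne M hM hd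
    exact ⟨M', h1, h2, h3.trans hc⟩
end

section
/- Fix integers $n_i \geq k_i \geq 1$ for $i, j \in [\ell]$ with $i \neq j$, an integer $0 \leq c$, and define $f(x) = \binom{n_i - x}{k_i}\binom{n_j - c + x}{k_j}$ for real $x$ (binomials extended via the Gamma function or falling factorials). Assume $n_i - c \geq k_i$, $n_j - c \geq k_j$, $n_i \geq 2k_i$, and $n_j \geq 2k_j$. Then $\min_{0 \leq x \leq c,\ x \in \mathbb{Z}} f(x) = \min\left\{ \binom{n_i - c}{k_i}\binom{n_j}{k_j},\ \binom{n_i}{k_i}\binom{n_j - c}{k_j} \right\}$, i.e., the minimum over integers $x \in [0, c]$ is attained at an endpoint. -/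
/-!
Both factors `x ↦ (n₁ - x).choose k₁` and `x ↦ (n₂ - c + x).choose k₂` are log-concave
sequences, because `n ↦ n.choose k` is, so their product is a positive log-concave sequence on
`[0, c]`. Such a sequence cannot dip strictly below both endpoint values: after its first strict
descent the ratio `F (i + 1) / F i` stays at most `1`, so from there on it is nonincreasing.
-/

def LogConcaveOn (F : ℕ → ℕ) (c : ℕ) : Prop :=
  ∀ i, i + 2 ≤ c → F i * F (i + 2) ≤ F (i + 1) * F (i + 1)

theorem Nat.choose_add_two_mul_choose_le (a k : ℕ) :
    (a + 2).choose k * a.choose k ≤ (a + 1).choose k * (a + 1).choose k := by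
  rcases lt_or_ge a k with hak | hka
  · simp [Nat.choose_eq_zero_of_lt hak]
  obtain ⟨m, rfl⟩ := Nat.exists_eq_add_of_le hka
  have h₀ : (k + m).choose k * (k + m + 1) = (k + m + 1).choose k * (m + 1) := by
    rw [Nat.choose_mul_succ_eq]; congr 2; omega
  have h₁ : (k + m + 1).choose k * (k + m + 2) = (k + m + 2).choose k * (m + 2) := by
    rw [Nat.choose_mul_succ_eq]; congr 2; omega
  -- after multiplying by `(a + 1) (m + 2)`, where `a = k + m`, the ratio identities reduce the
  -- claim to `(a + 2) (m + 1) ≤ (a + 1) (m + 2)`, that is, `m ≤ a`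
  refine Nat.le_of_mul_le_mul_right (c := (k + m + 1) * (m + 2)) ?_ (by positivity)
  calc (k + m + 2).choose k * (k + m).choose k * ((k + m + 1) * (m + 2))
      = ((k + m + 2).choose k * (m + 2)) * ((k + m).choose k * (k + m + 1)) := by ring
    _ = (k + m + 1).choose k * (k + m + 1).choose k * ((k + m + 2) * (m + 1)) := by
        rw [h₀, ← h₁]; ring
    _ ≤ (k + m + 1).choose k * (k + m + 1).choose k * ((k + m + 1) * (m + 2)) :=
        Nat.mul_le_mul_left _ (by nlinarith)

namespace LogConcaveOn

variable {F G : ℕ → ℕ} {c : ℕ}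

theorem mul (hF : LogConcaveOn F c) (hG : LogConcaveOn G c) :
    LogConcaveOn (fun x => F x * G x) c := fun i hi =>
  calc F i * G i * (F (i + 2) * G (i + 2)) = F i * F (i + 2) * (G i * G (i + 2)) := by ring
    _ ≤ F (i + 1) * F (i + 1) * (G (i + 1) * G (i + 1)) := Nat.mul_le_mul (hF i hi) (hG i hi)
    _ = F (i + 1) * G (i + 1) * (F (i + 1) * G (i + 1)) := by ring

theorem choose_sub (n k : ℕ) : LogConcaveOn (fun x => (n - x).choose k) n := by
  intro i hi
  obtain ⟨a, ha⟩ := Nat.exists_eq_add_of_le hi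
  have e₀ : n - i = a + 2 := by omega
  have e₁ : n - (i + 1) = a + 1 := by omega
  have e₂ : n - (i + 2) = a := by omega
  simpa only [e₀, e₁, e₂] using Nat.choose_add_two_mul_choose_le a k

theorem add_choose (m k c : ℕ) : LogConcaveOn (fun x => (m + x).choose k) c := by
  intro i _
  simpa only [mul_comm, ← add_assoc] using Nat.choose_add_two_mul_choose_le (m + i) k

theorem mono (hF : LogConcaveOn F c) {d : ℕ} (hd : d ≤ c) : LogConcaveOn F d :=
  fun i hi => hF i (hi.trans hd)

theorem succ_le_of_le (hF : LogConcaveOn F c) (hpos : ∀ x ≤ c, 0 < F x) {j m : ℕ}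
    (hdesc : F (j + 1) ≤ F j) (hjm : j ≤ m) (hmc : m + 1 ≤ c) : F (m + 1) ≤ F m := by
  induction m, hjm using Nat.le_induction with
  | base => exact hdesc
  | succ m _ ih =>
    have hm : F (m + 1) ≤ F m := ih (by omega)
    refine Nat.le_of_mul_le_mul_left ?_ (hpos (m + 1) (by omega))
    calc F (m + 1) * F (m + 2) ≤ F m * F (m + 2) := Nat.mul_le_mul_right _ hm
      _ ≤ F (m + 1) * F (m + 1) := hF m hmc

theorem min_endpoints_le (hF : LogConcaveOn F c) (hpos : ∀ x ≤ c, 0 < F x) {x : ℕ}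
    (hx : x ≤ c) : min (F c) (F 0) ≤ F x := by
  rcases le_or_gt (F 0) (F x) with h0 | hx0
  · exact min_le_of_right_le h0
  obtain ⟨j, hjx, hdesc⟩ : ∃ j < x, F (j + 1) < F j := by
    by_contra! hasc
    have hmono : MonotoneOn F (Set.Icc 0 x) :=
      monotoneOn_of_le_succ Set.ordConnected_Icc fun a _ _ ha => by
        rw [Order.succ_eq_add_one] at ha ⊢
        exact hasc a ha.2
    exact hx0.not_ge (hmono (Set.left_mem_Icc.2 x.zero_le) (Set.right_mem_Icc.2 x.zero_le)
      x.zero_le)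
  have hanti : AntitoneOn F (Set.Icc x c) :=
    antitoneOn_of_succ_le Set.ordConnected_Icc fun m _ hm hsm => by
      rw [Order.succ_eq_add_one] at hsm ⊢
      exact hF.succ_le_of_le hpos hdesc.le (hjx.le.trans hm.1) hsm.2
  exact min_le_of_left_le (hanti (Set.left_mem_Icc.2 hx) (Set.right_mem_Icc.2 hx) hx)

end LogConcaveOn

theorem stmt17_general (n₁ n₂ k₁ k₂ c : ℕ)
    (h₁ : k₁ + c ≤ n₁) (h₂ : k₂ + c ≤ n₂) :
    IsLeast {v : ℕ | ∃ x : ℕ, x ≤ c ∧ v = (n₁ - x).choose k₁ * (n₂ - c + x).choose k₂}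
      (min ((n₁ - c).choose k₁ * n₂.choose k₂) (n₁.choose k₁ * (n₂ - c).choose k₂)) := by
  set F : ℕ → ℕ := fun x => (n₁ - x).choose k₁ * (n₂ - c + x).choose k₂
  have hFc : F c = (n₁ - c).choose k₁ * n₂.choose k₂ := by
    simp only [F, Nat.sub_add_cancel (show c ≤ n₂ by omega)]
  have hF0 : F 0 = n₁.choose k₁ * (n₂ - c).choose k₂ := by simp [F]
  rw [← hFc, ← hF0]
  refine ⟨?_, ?_⟩
  · rcases min_choice (F c) (F 0) with h | h <;> rw [h]
    exacts [⟨c, le_rfl, rfl⟩, ⟨0, Nat.zero_le c, rfl⟩]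
  · rintro v ⟨x, hx, rfl⟩
    have hlc : LogConcaveOn F c :=
      ((LogConcaveOn.choose_sub n₁ k₁).mono (by omega)).mul (LogConcaveOn.add_choose _ k₂ c)
    exact hlc.min_endpoints_le
      (fun y _ => Nat.mul_pos (Nat.choose_pos (by omega)) (Nat.choose_pos (by omega))) hx

theorem stmt17 (n₁ n₂ k₁ k₂ c : ℕ) (hk₁ : 1 ≤ k₁) (hk₂ : 1 ≤ k₂)
    (h₁ : k₁ + c ≤ n₁) (h₂ : k₂ + c ≤ n₂) (h₃ : 2 * k₁ ≤ n₁) (h₄ : 2 * k₂ ≤ n₂) :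
    IsLeast {v : ℕ | ∃ x : ℕ, x ≤ c ∧ v = (n₁ - x).choose k₁ * (n₂ - c + x).choose k₂}
      (min ((n₁ - c).choose k₁ * n₂.choose k₂) (n₁.choose k₁ * (n₂ - c).choose k₂)) :=
  stmt17_general n₁ n₂ k₁ k₂ c h₁ h₂
end
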